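/- arXiv:2605.17597 — 7 statements merged into one kernel-verified Lean document; each statement's English description precedes it below -/
import Mathlib

section
/- Assume the Setup. For each i ∈ V let P_i ∈ ℝ^{n_i×n_i} be symmetric positive definite, Θ_i ∈ ℝ^{n_{N_i}×n_{N_i}} symmetric, Â_i ∈ ℝ^{n_i×n_{N_i}}, C̃_i ∈ ℝ^{p_i×n_{N_i}}, and let A_cl ∈ ℝ^{n×n} satisfy T_i A_cl = Â_i W_i for all i ∈ V. Suppose that for every i ∈ V the neighborhood Lyapunov inequality Â_iᵀ P_i Â_i − W_i T_iᵀ P_i T_i W_iᵀ + C̃_iᵀ C̃_i ≺ Θ_i holds, and that the relaxation condition Σ_{i∈V} W_iᵀ Θ_i W_i ⪯ 0 holds. Then, with P := Σ_{i∈V} T_iᵀ P_i T_i, the matrix P is symmetric positive definite and the global Lyapunov inequality A_clᵀ P A_cl − P + Σ_{i∈V} W_iᵀ C̃_iᵀ C̃_i W_i ≺ 0 holds. -/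
/-!
Since `i ∈ N i` and the `T j` are orthonormal selections, `T i * (W iᵀ * W i) = T i`. Hence
conjugating the `i`-th neighbourhood inequality by `W i` turns `Â i` into `T i * A_cl` and
`W i * (T i)ᵀ * P i * T i * (W i)ᵀ` into `(T i)ᵀ * P i * T i`; summing over `i`, the left-hand sides
add up to `A_clᵀ P A_cl - P + ∑ W iᵀ C̃ iᵀ C̃ i W i` and the relaxation condition absorbs
`∑ W iᵀ Θ i W i`. Strictness survives the summation because the `T i`, and therefore the `W i`,
jointly detect every nonzero vector.
-/

open Matrix

section

variable {ι R n : Type*} {m : ι → Type*} [Fintype n] [∀ i, Fintype (m i)]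

theorem Matrix.posDef_sum_conjTranspose_mul_mul [Fintype ι] [CommRing R] [PartialOrder R]
    [StarRing R] [IsOrderedAddMonoid R] {B : ∀ i, Matrix (m i) n R} {D : ∀ i, Matrix (m i) (m i) R}
    (hD : ∀ i, (D i).PosDef) (hB : ∀ x, (∀ i, B i *ᵥ x = 0) → x = 0) :
    (∑ i, (B i)ᴴ * D i * B i).PosDef := by
  refine PosDef.of_dotProduct_mulVec_pos
    (isSelfAdjoint_sum _ fun i _ => isHermitian_conjTranspose_mul_mul _ (hD i).1) fun x hx => ?_
  have hterm (i : ι) :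
      star x ⬝ᵥ ((B i)ᴴ * D i * B i) *ᵥ x = star (B i *ᵥ x) ⬝ᵥ D i *ᵥ (B i *ᵥ x) := by
    simp only [star_mulVec, dotProduct_mulVec, vecMul_vecMul]
  obtain ⟨i₀, hi₀⟩ : ∃ i, B i *ᵥ x ≠ 0 := by
    by_contra! h
    exact hx (hB x h)
  rw [sum_mulVec, dotProduct_sum]
  refine Finset.sum_pos' (fun i _ => ?_) ⟨i₀, Finset.mem_univ i₀, ?_⟩
  · rw [hterm]; exact (hD i).posSemidef.dotProduct_mulVec_nonneg _
  · rw [hterm]; exact (hD i₀).dotProduct_mulVec_pos hi₀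

theorem Matrix.eq_zero_of_forall_mulVec_eq_zero_of_sum_mul_eq_one [Fintype ι] [Semiring R]
    {B : ∀ i, Matrix (m i) n R} {C : ∀ i, Matrix n (m i) R} [DecidableEq n]
    (h : ∑ i, C i * B i = 1) {x : n → R} (hx : ∀ i, B i *ᵥ x = 0) : x = 0 := by
  rw [← one_mulVec x, ← h, sum_mulVec]
  exact Finset.sum_eq_zero fun i _ => by rw [← mulVec_mulVec, hx i, mulVec_zero]

theorem Matrix.mul_sum_transpose_mul_self_of_mem [Semiring R] [∀ i, DecidableEq (m i)]
    {T : ∀ i, Matrix (m i) n R} {s : Finset ι} {i : ι} (hi : i ∈ s)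
    (hTT : T i * (T i)ᵀ = 1) (hTTzero : ∀ j, i ≠ j → T i * (T j)ᵀ = 0) :
    T i * ∑ j ∈ s, (T j)ᵀ * T j = T i := by
  rw [Matrix.mul_sum, Finset.sum_eq_single_of_mem i hi fun j _ hj => by
    rw [← Matrix.mul_assoc, hTTzero j hj.symm, Matrix.zero_mul], ← Matrix.mul_assoc, hTT,
    Matrix.one_mul]

end

theorem Matrix.transpose_mul_neighborhoodLyapunov_mul {R k l n : Type*} [CommRing R]
    [Fintype k] [Fintype l] [Fintype n] {T : Matrix k n R} {W : Matrix l n R}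
    {A : Matrix n n R} {Â : Matrix k l R} (P : Matrix k k R) (Q : Matrix l l R)
    (hA : T * A = Â * W) (hTW : T * (Wᵀ * W) = T) :
    Wᵀ * (Âᵀ * P * Â - W * Tᵀ * P * (T * Wᵀ) + Q) * W
      = Aᵀ * (Tᵀ * P * T) * A - Tᵀ * P * T + Wᵀ * Q * W := by
  have hÂ : Wᵀ * Âᵀ = Aᵀ * Tᵀ := by rw [← transpose_mul, ← transpose_mul, hA]
  have hTWt : Wᵀ * W * Tᵀ = Tᵀ := by
    simpa only [transpose_mul, transpose_transpose] using congrArg transpose hTW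
  calc Wᵀ * (Âᵀ * P * Â - W * Tᵀ * P * (T * Wᵀ) + Q) * W
      = (Wᵀ * Âᵀ) * P * (Â * W) - (Wᵀ * W * Tᵀ) * P * (T * (Wᵀ * W)) + Wᵀ * Q * W := by
        simp only [Matrix.mul_sub, Matrix.sub_mul, Matrix.mul_add, Matrix.add_mul,
          Matrix.mul_assoc]
    _ = Aᵀ * (Tᵀ * P * T) * A - Tᵀ * P * T + Wᵀ * Q * W := by
        rw [hÂ, hTWt, hTW, ← hA]; simp only [Matrix.mul_assoc]

theorem stmt0_general
    {ι : Type} [Fintype ι]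
    (n : ℕ) (ni nN : ι → ℕ) (N : ι → Finset ι)
    (T : ∀ i : ι, Matrix (Fin (ni i)) (Fin n) ℝ)
    (W : ∀ i : ι, Matrix (Fin (nN i)) (Fin n) ℝ)
    (hNself : ∀ i : ι, i ∈ N i)
    (hTT : ∀ i : ι, T i * (T i)ᵀ = 1)
    (hTTzero : ∀ i j : ι, i ≠ j → T i * (T j)ᵀ = 0)
    (hTsum : ∑ i : ι, (T i)ᵀ * T i = 1)
    (hWTW : ∀ i : ι, (W i)ᵀ * W i = ∑ j ∈ N i, (T j)ᵀ * T j)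
    (p : ι → ℕ)
    (P : ∀ i : ι, Matrix (Fin (ni i)) (Fin (ni i)) ℝ)
    (hP : ∀ i : ι, (P i).PosDef)
    (Θ : ∀ i : ι, Matrix (Fin (nN i)) (Fin (nN i)) ℝ)
    (Ahat : ∀ i : ι, Matrix (Fin (ni i)) (Fin (nN i)) ℝ)
    (Ctil : ∀ i : ι, Matrix (Fin (p i)) (Fin (nN i)) ℝ)
    (Acl : Matrix (Fin n) (Fin n) ℝ)
    (hAcl : ∀ i : ι, T i * Acl = Ahat i * W i)
    (hLyap : ∀ i : ι,
      (Θ i - ((Ahat i)ᵀ * P i * Ahat i - W i * (T i)ᵀ * P i * (T i * (W i)ᵀ)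
        + (Ctil i)ᵀ * Ctil i)).PosDef)
    (hRelax : (-(∑ i : ι, (W i)ᵀ * Θ i * W i)).PosSemidef)
    :
    (∑ i : ι, (T i)ᵀ * P i * T i).PosDef ∧
    (-(Aclᵀ * (∑ i : ι, (T i)ᵀ * P i * T i) * Acl - (∑ i : ι, (T i)ᵀ * P i * T i)
        + ∑ i : ι, (W i)ᵀ * ((Ctil i)ᵀ * Ctil i) * W i)).PosDef := by
  have hTW (i : ι) : T i * ((W i)ᵀ * W i) = T i := by
    rw [hWTW]; exact mul_sum_transpose_mul_self_of_mem (hNself i) (hTT i) (hTTzero i)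
  have hTsep (x : Fin n → ℝ) : (∀ i, T i *ᵥ x = 0) → x = 0 :=
    eq_zero_of_forall_mulVec_eq_zero_of_sum_mul_eq_one hTsum
  have hWsep (x : Fin n → ℝ) (hx : ∀ i, W i *ᵥ x = 0) : x = 0 := hTsep x fun i => by
    rw [← hTW i, ← mulVec_mulVec, ← mulVec_mulVec, hx i, mulVec_zero, mulVec_zero]
  have hsplit : -(Aclᵀ * (∑ i, (T i)ᵀ * P i * T i) * Acl - ∑ i, (T i)ᵀ * P i * T i
        + ∑ i, (W i)ᵀ * ((Ctil i)ᵀ * Ctil i) * W i)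
      = ∑ i, (W i)ᵀ * (Θ i - ((Ahat i)ᵀ * P i * Ahat i - W i * (T i)ᵀ * P i * (T i * (W i)ᵀ)
          + (Ctil i)ᵀ * Ctil i)) * W i + -∑ i, (W i)ᵀ * Θ i * W i := by
    simp only [Matrix.mul_sub, Matrix.sub_mul,
      transpose_mul_neighborhoodLyapunov_mul _ _ (hAcl _) (hTW _), Finset.sum_sub_distrib,
      Finset.sum_add_distrib, ← Matrix.sum_mul, ← Matrix.mul_sum]
    abel
  refine ⟨?_, ?_⟩
  · simpa only [conjTranspose_eq_transpose_of_trivial] using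
      posDef_sum_conjTranspose_mul_mul hP hTsep
  · rw [hsplit]
    refine PosDef.add_posSemidef ?_ hRelax
    simpa only [conjTranspose_eq_transpose_of_trivial] using
      posDef_sum_conjTranspose_mul_mul hLyap hWsep

/-- Lemma 1 (global Lyapunov LMI): the decomposed neighborhood H₂-design conditions
imply the global Lyapunov inequality with block-diagonal Lyapunov matrix. -/
theorem stmt0
    {ι : Type} [Fintype ι] [DecidableEq ι]
    (n : ℕ) (ni nN : ι → ℕ) (N : ι → Finset ι)
    (T : ∀ i : ι, Matrix (Fin (ni i)) (Fin n) ℝ)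
    (W : ∀ i : ι, Matrix (Fin (nN i)) (Fin n) ℝ)
    (hNself : ∀ i : ι, i ∈ N i)
    (hn : n = ∑ i : ι, ni i)
    (hnN : ∀ i : ι, nN i = ∑ j ∈ N i, ni j)
    (hTT : ∀ i : ι, T i * (T i)ᵀ = 1)
    (hTTzero : ∀ i j : ι, i ≠ j → T i * (T j)ᵀ = 0)
    (hTsum : ∑ i : ι, (T i)ᵀ * T i = 1)
    (hWW : ∀ i : ι, W i * (W i)ᵀ = 1)
    (hWTW : ∀ i : ι, (W i)ᵀ * W i = ∑ j ∈ N i, (T j)ᵀ * T j)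
    (p : ι → ℕ)
    (P : ∀ i : ι, Matrix (Fin (ni i)) (Fin (ni i)) ℝ)
    (hP : ∀ i : ι, (P i).PosDef)
    (Θ : ∀ i : ι, Matrix (Fin (nN i)) (Fin (nN i)) ℝ)
    (hΘ : ∀ i : ι, (Θ i).IsSymm)
    (Ahat : ∀ i : ι, Matrix (Fin (ni i)) (Fin (nN i)) ℝ)
    (Ctil : ∀ i : ι, Matrix (Fin (p i)) (Fin (nN i)) ℝ)
    (Acl : Matrix (Fin n) (Fin n) ℝ)
    (hAcl : ∀ i : ι, T i * Acl = Ahat i * W i)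
    (hLyap : ∀ i : ι,
      (Θ i - ((Ahat i)ᵀ * P i * Ahat i - W i * (T i)ᵀ * P i * (T i * (W i)ᵀ)
        + (Ctil i)ᵀ * Ctil i)).PosDef)
    (hRelax : (-(∑ i : ι, (W i)ᵀ * Θ i * W i)).PosSemidef)
    :
    (∑ i : ι, (T i)ᵀ * P i * T i).PosDef ∧
    (-(Aclᵀ * (∑ i : ι, (T i)ᵀ * P i * T i) * Acl - (∑ i : ι, (T i)ᵀ * P i * T i)
        + ∑ i : ι, (W i)ᵀ * ((Ctil i)ᵀ * Ctil i) * W i)).PosDef :=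
  stmt0_general n ni nN N T W hNself hTT hTTzero hTsum hWTW p P hP Θ Ahat Ctil Acl hAcl hLyap hRelax
end

section
/- Assume the Setup. For each i ∈ V let P_i ∈ ℝ^{n_i×n_i} be symmetric positive definite, Θ_i ∈ ℝ^{n_{N_i}×n_{N_i}} symmetric, Â_i ∈ ℝ^{n_i×n_{N_i}}, C̃_i ∈ ℝ^{p_i×n_{N_i}}, and let A_cl ∈ ℝ^{n×n} satisfy T_i A_cl = Â_i W_i for all i ∈ V. Suppose that for every i ∈ V the inequality Â_iᵀ P_i Â_i − W_i T_iᵀ P_i T_i W_iᵀ + C̃_iᵀ C̃_i ≺ Θ_i holds, and that Σ_{i∈V} W_iᵀ Θ_i W_i ⪯ 0. Then every eigenvalue λ ∈ ℂ of A_cl (regarded as a complex matrix via the embedding ℝ ↪ ℂ) satisfies |λ| < 1; that is, the closed-loop matrix A_cl is Schur stable. -/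
/-!
The global Lyapunov matrix is `P = ∑ᵢ Tᵢᵀ Pᵢ Tᵢ`. Because `Tᵢ Wᵢᵀ Wᵢ = Tᵢ` and `Tᵢ A_cl = Âᵢ Wᵢ`,
conjugating the `i`-th local matrix `Θᵢ - (Âᵢᵀ Pᵢ Âᵢ - Wᵢ Tᵢᵀ Pᵢ Tᵢ Wᵢᵀ)` by `Wᵢ` gives
`Wᵢᵀ Θᵢ Wᵢ + Tᵢᵀ Pᵢ Tᵢ - A_clᵀ Tᵢᵀ Pᵢ Tᵢ A_cl`. Summing over `i`, `P - A_clᵀ P A_cl` is a sum of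
conjugated positive definite blocks plus `-∑ᵢ Wᵢᵀ Θᵢ Wᵢ ⪰ 0`; the blocks add up to a positive
definite matrix since the stacked `Tᵢ`, and hence the stacked `Wᵢ`, are left invertible.
Finally, for `A v = μ v` with `v ≠ 0`, `v* (P - A* P A) v = (1 - |μ|²) v* P v`.
-/

open Matrix
open scoped ComplexOrder

namespace Matrix

section JointlyInjective

variable {ι n R : Type*} [Fintype ι] [Fintype n] [DecidableEq n] {m : ι → Type*}
  [∀ i, Fintype (m i)]

theorem eq_zero_of_sum_mul_eq_one [Semiring R] {C : ∀ i, Matrix n (m i) R}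
    {B : ∀ i, Matrix (m i) n R} (hCB : ∑ i, C i * B i = 1) {x : n → R}
    (hx : ∀ i, B i *ᵥ x = 0) : x = 0 :=
  calc x = (∑ i, C i * B i) *ᵥ x := by rw [hCB, one_mulVec]
    _ = 0 := by simp only [sum_mulVec, ← mulVec_mulVec, hx, mulVec_zero, Finset.sum_const_zero]

theorem posDef_sum_conjTranspose_mul_mul_s1 [Ring R] [PartialOrder R] [StarRing R]
    [IsOrderedCancelAddMonoid R] {C : ∀ i, Matrix n (m i) R} {B : ∀ i, Matrix (m i) n R}
    (hCB : ∑ i, C i * B i = 1) {S : ∀ i, Matrix (m i) (m i) R} (hS : ∀ i, (S i).PosDef) :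
    (∑ i, (B i)ᴴ * S i * B i).PosDef := by
  refine .of_dotProduct_mulVec_pos
    (isSelfAdjoint_sum _ fun i _ ↦ isHermitian_conjTranspose_mul_mul _ (hS i).isHermitian)
    fun x hx ↦ ?_
  obtain ⟨i₀, hi₀⟩ : ∃ i, B i *ᵥ x ≠ 0 := by
    by_contra! h
    exact hx (eq_zero_of_sum_mul_eq_one hCB h)
  have hquad : ∀ i, star x ⬝ᵥ (((B i)ᴴ * S i * B i) *ᵥ x) =
      star (B i *ᵥ x) ⬝ᵥ (S i *ᵥ (B i *ᵥ x)) := fun i ↦ by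
    rw [← mulVec_mulVec, ← mulVec_mulVec, dotProduct_mulVec, star_mulVec]
  rw [sum_mulVec, dotProduct_sum]
  refine Finset.sum_pos' (fun i _ ↦ ?_) ⟨i₀, Finset.mem_univ _, ?_⟩
  · rw [hquad]; exact (hS i).posSemidef.dotProduct_mulVec_nonneg _
  · rw [hquad]; exact (hS i₀).dotProduct_mulVec_pos hi₀

end JointlyInjective

theorem mul_sum_transpose_mul_self_of_mem_s1 {ι k R : Type*} [Fintype k] [Semiring R]
    {m : ι → Type*} [∀ i, Fintype (m i)] [∀ i, DecidableEq (m i)] {T : ∀ i, Matrix (m i) k R}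
    {s : Finset ι} {i : ι}
    (hi : i ∈ s) (hTT : T i * (T i)ᵀ = 1) (hTT0 : ∀ j ≠ i, T i * (T j)ᵀ = 0) :
    T i * ∑ j ∈ s, (T j)ᵀ * T j = T i := by
  rw [Matrix.mul_sum, Finset.sum_eq_single_of_mem i hi fun j _ hji ↦ by
    rw [← Matrix.mul_assoc, hTT0 j hji, Matrix.zero_mul], ← Matrix.mul_assoc, hTT, Matrix.one_mul]

theorem transpose_mul_local_lyapunov_mul {k l n R : Type*} [Fintype k] [Fintype l] [Fintype n]
    [CommRing R] {T : Matrix k n R} {W : Matrix l n R} {Â : Matrix k l R} {A : Matrix n n R}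
    (hA : T * A = Â * W) (hTW : T * (Wᵀ * W) = T) (P : Matrix k k R) (Θ : Matrix l l R) :
    Wᵀ * (Θ - (Âᵀ * P * Â - W * Tᵀ * P * (T * Wᵀ))) * W =
      Wᵀ * Θ * W + (Tᵀ * P * T - Aᵀ * (Tᵀ * P * T) * A) := by
  have hÂ : Wᵀ * (Âᵀ * P * Â) * W = Aᵀ * (Tᵀ * P * T) * A :=
    calc _ = (Â * W)ᵀ * P * (Â * W) := by simp only [transpose_mul, Matrix.mul_assoc]
      _ = (T * A)ᵀ * P * (T * A) := by rw [hA]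
      _ = _ := by simp only [transpose_mul, Matrix.mul_assoc]
  have hT : Wᵀ * (W * Tᵀ * P * (T * Wᵀ)) * W = Tᵀ * P * T :=
    calc _ = (T * (Wᵀ * W))ᵀ * P * (T * (Wᵀ * W)) := by
          simp only [transpose_mul, transpose_transpose, Matrix.mul_assoc]
      _ = _ := by rw [hTW]
  rw [Matrix.mul_sub, Matrix.sub_mul, Matrix.mul_sub, Matrix.sub_mul, hÂ, hT]
  abel

theorem conjTranspose_map_ofReal {m n : Type*} (A : Matrix m n ℝ) :
    (A.map Complex.ofReal)ᴴ = Aᵀ.map Complex.ofReal := by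
  rw [← conjTranspose_eq_transpose_of_trivial, conjTranspose_map _ (fun _ ↦ by simp)]

theorem map_ofReal_mul {l m n : Type*} [Fintype m] (A : Matrix l m ℝ) (B : Matrix m n ℝ) :
    (A * B).map Complex.ofReal = A.map Complex.ofReal * B.map Complex.ofReal :=
  Matrix.map_mul (f := Complex.ofRealHom)

open scoped MatrixOrder in
theorem PosDef.map_ofReal {n : Type*} [Fintype n] [DecidableEq n] {S : Matrix n n ℝ}
    (hS : S.PosDef) :
    (S.map Complex.ofReal).PosDef := by
  obtain ⟨B, hB, rfl⟩ := CStarAlgebra.isStrictlyPositive_iff_eq_star_mul_self.mp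
    (isStrictlyPositive_iff_posDef.mpr hS)
  have hBc : IsUnit (B.map Complex.ofReal) := hB.map Complex.ofRealHom.mapMatrix
  rw [star_eq_conjTranspose, conjTranspose_eq_transpose_of_trivial, map_ofReal_mul,
    ← conjTranspose_map_ofReal]
  exact .conjTranspose_mul_self _ (mulVec_injective_iff_isUnit.mpr hBc)

theorem norm_lt_one_of_mem_spectrum_of_posDef {n 𝕜 : Type*} [Fintype n] [DecidableEq n] [RCLike 𝕜]
    {A P : Matrix n n 𝕜}
    (hP : P.PosDef) (hQ : (P - Aᴴ * P * A).PosDef) {μ : 𝕜} (hμ : μ ∈ spectrum 𝕜 A) :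
    ‖μ‖ < 1 := by
  rw [← spectrum_toLin', ← Module.End.hasEigenvalue_iff_mem_spectrum] at hμ
  obtain ⟨v, hv⟩ := hμ.exists_hasEigenvector
  have hAv : A *ᵥ v = μ • v := by simpa using hv.apply_eq_smul
  have hquad : star v ⬝ᵥ ((P - Aᴴ * P * A) *ᵥ v) =
      ((1 - ‖μ‖ ^ 2 : ℝ) : 𝕜) * (star v ⬝ᵥ (P *ᵥ v)) := by
    rw [sub_mulVec, ← mulVec_mulVec, ← mulVec_mulVec, hAv, dotProduct_sub,
      dotProduct_mulVec (star v) Aᴴ, ← star_mulVec, hAv, star_smul, mulVec_smul,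
      dotProduct_smul, smul_dotProduct, smul_smul, RCLike.star_def, RCLike.mul_conj,
      smul_eq_mul]
    push_cast
    ring
  have hpos := hQ.dotProduct_mulVec_pos hv.2
  rw [hquad] at hpos
  have h1 : 0 < 1 - ‖μ‖ ^ 2 :=
    RCLike.ofReal_pos.mp <| (pos_iff_pos_of_mul_pos hpos).mpr (hP.dotProduct_mulVec_pos hv.2)
  exact (sq_lt_one_iff₀ (norm_nonneg μ)).mp (sub_pos.mp h1)

theorem norm_lt_one_of_mem_spectrum_map_ofReal {n : Type*} [Fintype n] [DecidableEq n]
    {A P : Matrix n n ℝ}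
    (hP : P.PosDef) (hQ : (P - Aᵀ * P * A).PosDef) {μ : ℂ}
    (hμ : μ ∈ spectrum ℂ (A.map Complex.ofReal)) : ‖μ‖ < 1 := by
  refine norm_lt_one_of_mem_spectrum_of_posDef hP.map_ofReal ?_ hμ
  rw [conjTranspose_map_ofReal, ← map_ofReal_mul, ← map_ofReal_mul,
    ← Matrix.map_sub _ Complex.ofReal_sub]
  exact hQ.map_ofReal

end Matrix

theorem stmt1_general
    {ι : Type} [Fintype ι]
    (n : ℕ) (ni nN : ι → ℕ) (N : ι → Finset ι)
    (T : ∀ i : ι, Matrix (Fin (ni i)) (Fin n) ℝ)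
    (W : ∀ i : ι, Matrix (Fin (nN i)) (Fin n) ℝ)
    (hNself : ∀ i : ι, i ∈ N i)
    (hTT : ∀ i : ι, T i * (T i)ᵀ = 1)
    (hTTzero : ∀ i j : ι, i ≠ j → T i * (T j)ᵀ = 0)
    (hTsum : ∑ i : ι, (T i)ᵀ * T i = 1)
    (hWTW : ∀ i : ι, (W i)ᵀ * W i = ∑ j ∈ N i, (T j)ᵀ * T j)
    (p : ι → ℕ)
    (P : ∀ i : ι, Matrix (Fin (ni i)) (Fin (ni i)) ℝ)
    (hP : ∀ i : ι, (P i).PosDef)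
    (Θ : ∀ i : ι, Matrix (Fin (nN i)) (Fin (nN i)) ℝ)
    (Ahat : ∀ i : ι, Matrix (Fin (ni i)) (Fin (nN i)) ℝ)
    (Ctil : ∀ i : ι, Matrix (Fin (p i)) (Fin (nN i)) ℝ)
    (Acl : Matrix (Fin n) (Fin n) ℝ)
    (hAcl : ∀ i : ι, T i * Acl = Ahat i * W i)
    (hLyap : ∀ i : ι,
      (Θ i - ((Ahat i)ᵀ * P i * Ahat i - W i * (T i)ᵀ * P i * (T i * (W i)ᵀ)
        + (Ctil i)ᵀ * Ctil i)).PosDef)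
    (hRelax : (-(∑ i : ι, (W i)ᵀ * Θ i * W i)).PosSemidef)
    :
    ∀ μ ∈ spectrum ℂ (Acl.map Complex.ofReal), ‖μ‖ < 1 := by
  set Pg := ∑ i, (T i)ᵀ * P i * T i
  have hTW : ∀ i, T i * ((W i)ᵀ * W i) = T i := fun i ↦ by
    rw [hWTW]
    exact mul_sum_transpose_mul_self_of_mem_s1 (hNself i) (hTT i) fun j hji ↦ hTTzero i j hji.symm
  have hWsum : ∑ i, (T i)ᵀ * T i * (W i)ᵀ * W i = 1 := by
    simpa only [Matrix.mul_assoc, hTW] using hTsum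
  have hPg : Pg.PosDef := by
    simpa only [conjTranspose_eq_transpose_of_trivial] using
      posDef_sum_conjTranspose_mul_mul_s1 hTsum hP
  have hLocal : ∀ i,
      (Θ i - ((Ahat i)ᵀ * P i * Ahat i - W i * (T i)ᵀ * P i * (T i * (W i)ᵀ))).PosDef := fun i ↦ by
    simpa only [sub_add_eq_sub_sub, sub_add_cancel, conjTranspose_eq_transpose_of_trivial] using
      (hLyap i).add_posSemidef (posSemidef_conjTranspose_mul_self (Ctil i))
  have hDecomp : Pg - Aclᵀ * Pg * Acl = ∑ i, (W i)ᵀ *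
      (Θ i - ((Ahat i)ᵀ * P i * Ahat i - W i * (T i)ᵀ * P i * (T i * (W i)ᵀ))) * W i +
      -∑ i, (W i)ᵀ * Θ i * W i := by
    simp only [transpose_mul_local_lyapunov_mul (hAcl _) (hTW _), Finset.sum_add_distrib,
      Finset.sum_sub_distrib, Pg, Matrix.mul_sum, Matrix.sum_mul]
    abel
  have hQ : (Pg - Aclᵀ * Pg * Acl).PosDef := by
    rw [hDecomp]
    simpa only [conjTranspose_eq_transpose_of_trivial] using
      (posDef_sum_conjTranspose_mul_mul_s1 hWsum hLocal).add_posSemidef hRelax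
  exact fun μ ↦ norm_lt_one_of_mem_spectrum_map_ofReal hPg hQ

/-- Lemma 1 (Schur stability): the decomposed neighborhood Lyapunov conditions with
relaxation terms imply all complex eigenvalues of the closed-loop matrix have modulus < 1. -/
theorem stmt1
    {ι : Type} [Fintype ι] [DecidableEq ι]
    (n : ℕ) (ni nN : ι → ℕ) (N : ι → Finset ι)
    (T : ∀ i : ι, Matrix (Fin (ni i)) (Fin n) ℝ)
    (W : ∀ i : ι, Matrix (Fin (nN i)) (Fin n) ℝ)
    (hNself : ∀ i : ι, i ∈ N i)
    (hn : n = ∑ i : ι, ni i)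
    (hnN : ∀ i : ι, nN i = ∑ j ∈ N i, ni j)
    (hTT : ∀ i : ι, T i * (T i)ᵀ = 1)
    (hTTzero : ∀ i j : ι, i ≠ j → T i * (T j)ᵀ = 0)
    (hTsum : ∑ i : ι, (T i)ᵀ * T i = 1)
    (hWW : ∀ i : ι, W i * (W i)ᵀ = 1)
    (hWTW : ∀ i : ι, (W i)ᵀ * W i = ∑ j ∈ N i, (T j)ᵀ * T j)
    (p : ι → ℕ)
    (P : ∀ i : ι, Matrix (Fin (ni i)) (Fin (ni i)) ℝ)
    (hP : ∀ i : ι, (P i).PosDef)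
    (Θ : ∀ i : ι, Matrix (Fin (nN i)) (Fin (nN i)) ℝ)
    (hΘ : ∀ i : ι, (Θ i).IsSymm)
    (Ahat : ∀ i : ι, Matrix (Fin (ni i)) (Fin (nN i)) ℝ)
    (Ctil : ∀ i : ι, Matrix (Fin (p i)) (Fin (nN i)) ℝ)
    (Acl : Matrix (Fin n) (Fin n) ℝ)
    (hAcl : ∀ i : ι, T i * Acl = Ahat i * W i)
    (hLyap : ∀ i : ι,
      (Θ i - ((Ahat i)ᵀ * P i * Ahat i - W i * (T i)ᵀ * P i * (T i * (W i)ᵀ)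
        + (Ctil i)ᵀ * Ctil i)).PosDef)
    (hRelax : (-(∑ i : ι, (W i)ᵀ * Θ i * W i)).PosSemidef)
    :
    ∀ μ ∈ spectrum ℂ (Acl.map Complex.ofReal), ‖μ‖ < 1 :=
  stmt1_general n ni nN N T W hNself hTT hTTzero hTsum hWTW p P hP Θ Ahat Ctil Acl hAcl hLyap hRelax
end

section
/- Assume the Setup and suppose the neighborhood relation is symmetric: j ∈ N_i if and only if i ∈ N_j. Suppose for each i ∈ V there exist: a symmetric Φ_i ∈ ℝ^{n_{d,i}×n_{d,i}}, a symmetric positive definite E_i ∈ ℝ^{n_i×n_i}, a symmetric P̄_i ∈ ℝ^{(n_i+q_i)×(n_i+q_i)}, γ_i > 0, symmetric F_i, S_i ∈ ℝ^{n_{N_i}×n_{N_i}}, Y_i ∈ ℝ^{m_i×n_{N_i}}, and matrices A'_i ∈ ℝ^{n_i×n_{N_i}}, B'_i ∈ ℝ^{n_i×m_i}, B_{d,i} ∈ ℝ^{n_i×n_{d,i}}, C_{z,i} ∈ ℝ^{q_i×n_{N_i}}, D_{z,i} ∈ ℝ^{q_i×m_i}, C_{y,i} ∈ ℝ^{p_i×n_{N_i}},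 D_{y,i} ∈ ℝ^{p_i×m_i}, such that, with E := Σ_{j∈V} T_jᵀ E_j T_j, E_{N_i} := W_i E W_iᵀ, Ē_i := W_i T_iᵀ E_i T_i W_iᵀ, J_i := the (n_i+q_i)×n_{N_i} matrix stacking A'_i E_{N_i} + B'_i Y_i on top of C_{z,i} E_{N_i} + D_{z,i} Y_i, and H_i := C_{y,i} E_{N_i} + D_{y,i} Y_i: (a) trace(Φ_i) < γ_i²; (b) the block matrix [[Φ_i, B_{d,i}ᵀ],[B_{d,i}, E_i]] ≻ 0; (c) the 3×3 block matrix [[P̄_i + blkdiag(−E_i, 0_{q_i}), J_i, 0],[J_iᵀ, −Ē_i − F_i, H_iᵀ],[0, H_i, −I_{p_i}]] ≺ 0; (d) F_i ⪯ S_i and S_i = Σ_{j∈N_i} (W_i T_jᵀ) S_j^{(i)} (T_j W_iᵀ) for some symmetric matrices S_j^{(i)} ∈ ℝ^{n_j×n_j}; (e) Σ_{j∈N_i} T_i W_jᵀ S_j W_j T_iᵀ ⪯ 0. Then, with P_i := E_i⁻¹, K_i := Y_i E_{N_i}⁻¹, Θ_i := E_{N_i}⁻¹ F_i E_{N_i}⁻¹,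 for every matrix Δ̃_i ∈ ℝ^{n_i×q_i} satisfying [I_{n_i}, Δ̃_i] P̄_i [I_{n_i}, Δ̃_i]ᵀ ⪰ 0, the following hold for every i ∈ V: (i) with Â_i := A'_i + B'_i K_i + Δ̃_i (C_{z,i} + D_{z,i} K_i) and C̃_i := C_{y,i} + D_{y,i} K_i, the inequality Â_iᵀ P_i Â_i − W_i T_iᵀ P_i T_i W_iᵀ + C̃_iᵀ C̃_i ≺ Θ_i holds; (ii) trace(B_{d,i}ᵀ P_i B_{d,i}) < γ_i²; and (iii) Σ_{i∈V} W_iᵀ Θ_i W_i ⪯ 0. -/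
/-!
Everything rests on one identity. The global matrix `E = Σⱼ Tⱼᵀ Eⱼ Tⱼ` is block diagonal, and
`Wᵢᵀ Wᵢ` projects onto the blocks of `Nᵢ`. Hence `E_{Nᵢ} = Wᵢ E Wᵢᵀ` intertwines with the blocks:
`E_{Nᵢ}⁻¹ Wᵢ Tⱼᵀ = Wᵢ Tⱼᵀ Eⱼ⁻¹` for `j ∈ Nᵢ`.

(i) A Schur complement removes the output block of (c). Congruence with `blkdiag([I Δ̃ᵢ], I)`,
plus the multiplier inequality `[I Δ̃ᵢ] P̄ᵢ [I Δ̃ᵢ]ᵀ ⪰ 0`, turns the corner `P̄ᵢ + blkdiag(-Eᵢ, 0)`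
into `Eᵢ`. A second Schur complement and congruence with `E_{Nᵢ}⁻¹` then give the Lyapunov
inequality; the intertwining identifies `E_{Nᵢ}⁻¹ Ēᵢ E_{Nᵢ}⁻¹` with `Wᵢ Tᵢᵀ Pᵢ Tᵢ Wᵢᵀ`.
(ii) is the Schur complement of (b) with respect to `Eᵢ`.

(iii) The intertwining turns `Wᵢᵀ E_{Nᵢ}⁻¹ Sᵢ E_{Nᵢ}⁻¹ Wᵢ` into
`Σ_{j ∈ Nᵢ} Tⱼᵀ Eⱼ⁻¹ S_j^{(i)} Eⱼ⁻¹ Tⱼ`. The neighbourhoods are symmetric, so the double sum can be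
regrouped by `j`, and `Σ_{i ∈ Nⱼ} S_j^{(i)}` is then exactly the negative semidefinite sum in (e).
With `Fᵢ ⪯ Sᵢ`, this bounds `Σᵢ Wᵢᵀ Θᵢ Wᵢ` above by `0`.
-/

open Matrix

namespace Matrix

section Real

variable {l m : Type*}

lemma PosDef.transpose_eq {M : Matrix m m ℝ} (hM : M.PosDef) : Mᵀ = M :=
  (isHermitian_iff_isSymm.mp hM.isHermitian).eq

variable [Fintype l] [Fintype m]

lemma PosDef.isUnit_det [DecidableEq m] {M : Matrix m m ℝ} (hM : M.PosDef) : IsUnit M.det :=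
  isUnit_iff_ne_zero.2 hM.det_pos.ne'

lemma PosSemidef.mul_mul_transpose {M : Matrix m m ℝ} (hM : M.PosSemidef) (A : Matrix l m ℝ) :
    (A * M * Aᵀ).PosSemidef := by
  simpa [conjTranspose_eq_transpose_of_trivial] using hM.mul_mul_conjTranspose_same A

lemma PosSemidef.transpose_mul_mul {M : Matrix m m ℝ} (hM : M.PosSemidef) (A : Matrix m l ℝ) :
    (Aᵀ * M * A).PosSemidef := by
  simpa [conjTranspose_eq_transpose_of_trivial] using hM.conjTranspose_mul_mul_same A

lemma PosDef.mul_mul_transpose_of_mul_eq_one [DecidableEq l] {M : Matrix m m ℝ} (hM : M.PosDef)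
    {A : Matrix l m ℝ} {R : Matrix m l ℝ} (hAR : A * R = 1) : (A * M * Aᵀ).PosDef := by
  have hinj : Function.Injective A.vecMul := fun x y h => by
    simpa [vecMul_vecMul, hAR] using congrArg (· ᵥ* R) h
  simpa [conjTranspose_eq_transpose_of_trivial] using hM.mul_mul_conjTranspose_same hinj

lemma PosDef.inv_mul_mul_inv_sub {n : Type*} [Fintype n] [DecidableEq m] {X : Matrix m m ℝ}
    (hX : X.PosDef) {Q : Matrix m m ℝ} {A : Matrix l m ℝ} {R : Matrix l l ℝ} {L : Matrix n m ℝ}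
    (h : (Q - (L * X)ᵀ * (L * X) - (A * X)ᵀ * R * (A * X)).PosDef) :
    (X⁻¹ * Q * X⁻¹ - (Aᵀ * R * A + Lᵀ * L)).PosDef := by
  have hX' := hX.isUnit_det
  convert h.mul_mul_transpose_of_mul_eq_one (nonsing_inv_mul X hX') using 1
  simp only [hX.inv.transpose_eq, transpose_mul, hX.transpose_eq, Matrix.mul_sub, Matrix.sub_mul,
    ← Matrix.mul_assoc, nonsing_inv_mul _ hX', Matrix.one_mul]
  simp only [Matrix.mul_assoc, mul_nonsing_inv _ hX', Matrix.mul_one]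
  abel

lemma fromBlocks_diag_mul_fromBlocks_mul_transpose [DecidableEq m] {n : Type*}
    (C : Matrix n l ℝ) (X : Matrix l l ℝ) (Y : Matrix l m ℝ) (Q : Matrix m m ℝ) :
    fromBlocks C 0 0 (1 : Matrix m m ℝ) * fromBlocks X Y Yᵀ Q
        * (fromBlocks C 0 0 (1 : Matrix m m ℝ))ᵀ
      = fromBlocks (C * X * Cᵀ) (C * Y) (C * Y)ᵀ Q := by
  rw [fromBlocks_transpose, fromBlocks_multiply, fromBlocks_multiply]
  simp only [transpose_zero, transpose_one, transpose_mul, Matrix.mul_zero, Matrix.zero_mul,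
    Matrix.mul_one, Matrix.one_mul, add_zero, zero_add]

variable [DecidableEq l] [DecidableEq m]

lemma PosDef.schur₂₂ {A : Matrix l l ℝ} {B : Matrix l m ℝ} {D : Matrix m m ℝ}
    (hD : D.PosDef) (h : (fromBlocks A B Bᵀ D).PosDef) : (A - B * D⁻¹ * Bᵀ).PosDef := by
  let G : Matrix l (l ⊕ m) ℝ := fromCols 1 (-(B * D⁻¹))
  have hG : G * fromRows (1 : Matrix l l ℝ) (0 : Matrix m l ℝ) = 1 := by
    simp [G, fromCols_mul_fromRows]
  convert h.mul_mul_transpose_of_mul_eq_one hG using 1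
  simp only [G, transpose_fromCols, transpose_neg, transpose_mul, hD.inv.transpose_eq,
    transpose_one, fromCols_mul_fromBlocks, fromCols_mul_fromRows, Matrix.one_mul,
    Matrix.mul_one, Matrix.neg_mul, Matrix.mul_neg, Matrix.mul_assoc,
    nonsing_inv_mul _ hD.isUnit_det, add_neg_cancel, Matrix.zero_mul]
  abel

lemma PosDef.schur₁₁ {A : Matrix l l ℝ} {B : Matrix l m ℝ} {D : Matrix m m ℝ}
    (hA : A.PosDef) (h : (fromBlocks A B Bᵀ D).PosDef) : (D - Bᵀ * A⁻¹ * B).PosDef := by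
  let G : Matrix m (l ⊕ m) ℝ := fromCols (-(Bᵀ * A⁻¹)) 1
  have hG : G * fromRows (0 : Matrix l m ℝ) (1 : Matrix m m ℝ) = 1 := by
    simp [G, fromCols_mul_fromRows]
  convert h.mul_mul_transpose_of_mul_eq_one hG using 1
  simp only [G, transpose_fromCols, transpose_neg, transpose_mul, hA.inv.transpose_eq,
    transpose_one, transpose_transpose, fromCols_mul_fromBlocks, fromCols_mul_fromRows,
    Matrix.one_mul, Matrix.mul_one, Matrix.neg_mul, Matrix.mul_neg, Matrix.mul_assoc,
    nonsing_inv_mul _ hA.isUnit_det, neg_add_cancel, Matrix.zero_mul]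
  abel

lemma PosDef.neg_sub_mul_transpose_of_neg_fromBlocks {M : Matrix l l ℝ} {B : Matrix l m ℝ}
    (h : (-(fromBlocks M B Bᵀ (-1))).PosDef) : (-M - B * Bᵀ).PosDef := by
  rw [fromBlocks_neg, neg_neg, ← transpose_neg] at h
  simpa using PosDef.one.schur₂₂ h

lemma trace_transpose_mul_inv_mul_lt {Φ : Matrix l l ℝ} {B : Matrix m l ℝ} {E : Matrix m m ℝ}
    (hE : E.PosDef) (h : (fromBlocks Φ Bᵀ B E).PosDef) {c : ℝ} (hΦ : Φ.trace < c) :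
    (Bᵀ * E⁻¹ * B).trace < c := by
  have hschur := hE.schur₂₂ (B := Bᵀ) (by rwa [transpose_transpose])
  have := hschur.posSemidef.trace_nonneg
  rw [transpose_transpose, trace_sub] at this
  linarith

end Real

section CommRing

variable {l m α : Type*} [Fintype l] [Fintype m] [DecidableEq l] [DecidableEq m] [CommRing α]

lemma inv_mul_eq_mul_inv_of_mul_eq_mul {X : Matrix m m α} {Y : Matrix l l α} {U : Matrix m l α}
    (hX : IsUnit X.det) (hY : IsUnit Y.det) (h : X * U = U * Y) : X⁻¹ * U = U * Y⁻¹ := by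
  calc X⁻¹ * U = X⁻¹ * (U * Y) * Y⁻¹ := by
        rw [Matrix.mul_assoc, mul_nonsing_inv_cancel_right _ _ hY]
    _ = U * Y⁻¹ := by rw [← h, nonsing_inv_mul_cancel_left _ _ hX]

lemma inv_mul_mul_mul_transpose_mul_inv {X : Matrix m m α} {Y : Matrix l l α}
    {U : Matrix m l α} (hXs : (X⁻¹)ᵀ = X⁻¹) (hYs : (Y⁻¹)ᵀ = Y⁻¹) (h : X⁻¹ * U = U * Y⁻¹)
    (Z : Matrix l l α) : X⁻¹ * (U * Z * Uᵀ) * X⁻¹ = U * (Y⁻¹ * Z * Y⁻¹) * Uᵀ := by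
  have h' : Uᵀ * X⁻¹ = Y⁻¹ * Uᵀ := by
    simpa only [transpose_mul, hXs, hYs] using congrArg transpose h
  simp only [← Matrix.mul_assoc, h]
  simp only [Matrix.mul_assoc, h']

end CommRing

end Matrix

section RobustLMI

variable {a b c : Type*} [Fintype a] [Fintype b] [Fintype c] [DecidableEq a] [DecidableEq c]

lemma posDef_fromBlocks_of_uncertainty {E : Matrix a a ℝ} {P : Matrix (a ⊕ b) (a ⊕ b) ℝ}
    {J : Matrix (a ⊕ b) c ℝ} {Q : Matrix c c ℝ} {Δ : Matrix a b ℝ}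
    (h : (fromBlocks (-(P + fromBlocks (-E) 0 0 0)) (-J) (-J)ᵀ Q).PosDef)
    (hΔ : (fromCols (1 : Matrix a a ℝ) Δ * P * (fromCols (1 : Matrix a a ℝ) Δ)ᵀ).PosSemidef) :
    (fromBlocks E (-(fromCols (1 : Matrix a a ℝ) Δ * J)) (-(fromCols (1 : Matrix a a ℝ) Δ * J))ᵀ
      Q).PosDef := by
  set C := fromCols (1 : Matrix a a ℝ) Δ
  have hCE : C * fromBlocks (-E) 0 0 (0 : Matrix b b ℝ) * Cᵀ = -E := by
    simp [C, transpose_fromCols, fromCols_mul_fromBlocks, fromCols_mul_fromRows]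
  have hG : fromBlocks C 0 0 (1 : Matrix c c ℝ)
      * fromBlocks (fromRows (1 : Matrix a a ℝ) (0 : Matrix b a ℝ)) 0 0 (1 : Matrix c c ℝ) = 1 := by
    simp [C, fromBlocks_multiply, fromCols_mul_fromRows, fromBlocks_one]
  have hcongr := h.mul_mul_transpose_of_mul_eq_one hG
  rw [fromBlocks_diag_mul_fromBlocks_mul_transpose] at hcongr
  have hcorner : (fromBlocks (C * P * Cᵀ) 0 0 (0 : Matrix c c ℝ)).PosSemidef := by
    have := hΔ.mul_mul_transpose (fromRows (1 : Matrix a a ℝ) (0 : Matrix c a ℝ))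
    rwa [fromRows_mul, transpose_fromRows, fromRows_mul_fromCols, Matrix.one_mul,
      Matrix.zero_mul, transpose_one, transpose_zero, Matrix.mul_one, Matrix.mul_zero,
      Matrix.zero_mul, Matrix.zero_mul] at this
  convert hcongr.add_posSemidef hcorner using 1
  rw [fromBlocks_add, Matrix.mul_neg, Matrix.mul_neg, Matrix.neg_mul, Matrix.mul_add,
    Matrix.add_mul, hCE]
  simp

lemma posDef_of_robust_lmi [DecidableEq b] {d : Type*} [Fintype d] [DecidableEq d]
    {E : Matrix a a ℝ} (hE : E.PosDef) {P : Matrix (a ⊕ b) (a ⊕ b) ℝ} {J : Matrix (a ⊕ b) c ℝ}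
    {R : Matrix c c ℝ} {H : Matrix d c ℝ}
    (hLMI : (-(fromBlocks (fromBlocks (P + fromBlocks (-E) 0 0 0) J Jᵀ R) (fromRows 0 Hᵀ)
      (fromCols 0 H) (-1))).PosDef)
    {Δ : Matrix a b ℝ}
    (hΔ : (fromCols (1 : Matrix a a ℝ) Δ * P * (fromCols (1 : Matrix a a ℝ) Δ)ᵀ).PosSemidef) :
    (-R - Hᵀ * H - (fromCols (1 : Matrix a a ℝ) Δ * J)ᵀ * E⁻¹
      * (fromCols (1 : Matrix a a ℝ) Δ * J)).PosDef := by
  have hcol : fromCols (0 : Matrix d (a ⊕ b) ℝ) H = (fromRows 0 Hᵀ)ᵀ := by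
    rw [transpose_fromRows, transpose_zero, transpose_transpose]
  rw [hcol] at hLMI
  have hout := hLMI.neg_sub_mul_transpose_of_neg_fromBlocks
  have hblk : (fromBlocks (-(P + fromBlocks (-E) 0 0 0)) (-J) (-J)ᵀ (-R - Hᵀ * H)).PosDef := by
    convert hout using 1
    rw [transpose_fromRows, fromRows_mul_fromCols, fromBlocks_neg,
      sub_eq_add_neg (fromBlocks _ _ _ _), fromBlocks_neg, fromBlocks_add]
    simp [sub_eq_add_neg]
  simpa using hE.schur₁₁ (posDef_fromBlocks_of_uncertainty hblk hΔ)

lemma posDef_closedLoop_of_lmi [DecidableEq b] {d e : Type*} [Fintype d] [Fintype e]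
    [DecidableEq d] {E : Matrix a a ℝ} (hE : E.PosDef) {X : Matrix c c ℝ} (hX : X.PosDef)
    {P : Matrix (a ⊕ b) (a ⊕ b) ℝ} {Ebar F : Matrix c c ℝ} {Y : Matrix e c ℝ}
    {A : Matrix a c ℝ} {B : Matrix a e ℝ} {Cz : Matrix b c ℝ} {Dz : Matrix b e ℝ}
    {Cy : Matrix d c ℝ} {Dy : Matrix d e ℝ}
    (hLMI : (-(fromBlocks
      (fromBlocks (P + fromBlocks (-E) 0 0 0) (fromRows (A * X + B * Y) (Cz * X + Dz * Y))
        (fromRows (A * X + B * Y) (Cz * X + Dz * Y))ᵀ (-Ebar - F))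
      (fromRows 0 (Cy * X + Dy * Y)ᵀ) (fromCols 0 (Cy * X + Dy * Y)) (-1))).PosDef)
    {Δ : Matrix a b ℝ}
    (hΔ : (fromCols (1 : Matrix a a ℝ) Δ * P * (fromCols (1 : Matrix a a ℝ) Δ)ᵀ).PosSemidef) :
    (X⁻¹ * F * X⁻¹
      - ((A + B * (Y * X⁻¹) + Δ * (Cz + Dz * (Y * X⁻¹)))ᵀ * E⁻¹
          * (A + B * (Y * X⁻¹) + Δ * (Cz + Dz * (Y * X⁻¹)))
        - X⁻¹ * Ebar * X⁻¹ + (Cy + Dy * (Y * X⁻¹))ᵀ * (Cy + Dy * (Y * X⁻¹)))).PosDef := by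
  set K := Y * X⁻¹
  have hYK : Y = K * X := by rw [nonsing_inv_mul_cancel_right _ _ hX.isUnit_det]
  have h := posDef_of_robust_lmi hE hLMI hΔ
  have hJ : fromCols (1 : Matrix a a ℝ) Δ * fromRows (A * X + B * Y) (Cz * X + Dz * Y)
      = (A + B * K + Δ * (Cz + Dz * K)) * X := by
    rw [fromCols_mul_fromRows, Matrix.one_mul, hYK]
    simp only [Matrix.add_mul, Matrix.mul_add, Matrix.mul_assoc]
  have hH : Cy * X + Dy * Y = (Cy + Dy * K) * X := by
    rw [hYK]
    simp only [Matrix.add_mul, Matrix.mul_assoc]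
  rw [hJ, hH] at h
  convert hX.inv_mul_mul_inv_sub h using 1
  rw [neg_sub, sub_neg_eq_add, Matrix.mul_add X⁻¹, Matrix.add_mul _ _ X⁻¹]
  abel

end RobustLMI

section Selection

variable {ι k : Type*} [Fintype k] {a b : ι → Type*} [∀ i, Fintype (a i)] [∀ i, DecidableEq (a i)]
  [∀ i, Fintype (b i)]

structure IsBlockSelection (T : ∀ i, Matrix (a i) k ℝ) : Prop where
  mul_transpose_self : ∀ i, T i * (T i)ᵀ = 1
  mul_transpose_of_ne : ∀ i j, i ≠ j → T i * (T j)ᵀ = 0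

variable {T : ∀ i, Matrix (a i) k ℝ} {W : ∀ i, Matrix (b i) k ℝ} {N : ι → Finset ι}

lemma sum_transpose_mul_mul_mul_transpose (hT : IsBlockSelection T)
    (X : ∀ i, Matrix (a i) (a i) ℝ) {s : Finset ι} {j : ι} (hj : j ∈ s) :
    (∑ l ∈ s, (T l)ᵀ * X l * T l) * (T j)ᵀ = (T j)ᵀ * X j := by
  rw [Matrix.sum_mul, Finset.sum_eq_single_of_mem j hj, Matrix.mul_assoc, hT.mul_transpose_self,
    Matrix.mul_one]
  intro l _ hlj
  rw [Matrix.mul_assoc, hT.mul_transpose_of_ne l j hlj, Matrix.mul_zero]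

lemma transpose_mul_mul_transpose_of_mem (hT : IsBlockSelection T)
    (hWTW : ∀ i, (W i)ᵀ * W i = ∑ j ∈ N i, (T j)ᵀ * T j) {i j : ι} (hj : j ∈ N i) :
    (W i)ᵀ * (W i * (T j)ᵀ) = (T j)ᵀ := by
  have h := sum_transpose_mul_mul_mul_transpose hT (fun l => (1 : Matrix (a l) (a l) ℝ)) hj
  simp only [Matrix.mul_one] at h
  rw [← Matrix.mul_assoc, hWTW i, h]

lemma mul_transpose_mul_of_mem (hT : IsBlockSelection T)
    (hWTW : ∀ i, (W i)ᵀ * W i = ∑ j ∈ N i, (T j)ᵀ * T j) {i j : ι} (hj : j ∈ N i) :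
    T j * (W i)ᵀ * W i = T j := by
  simpa only [transpose_mul, transpose_transpose, Matrix.mul_assoc] using
    congrArg transpose (transpose_mul_mul_transpose_of_mem hT hWTW hj)

lemma mul_transpose_mul_mul_mul_transpose_eq_of_mem (hT : IsBlockSelection T)
    (hWTW : ∀ i, (W i)ᵀ * W i = ∑ j ∈ N i, (T j)ᵀ * T j) {i : ι} {S : Matrix (b i) (b i) ℝ}
    {Sblk : ∀ j, Matrix (a j) (a j) ℝ}
    (hS : S = ∑ j ∈ N i, W i * (T j)ᵀ * Sblk j * (T j * (W i)ᵀ)) {j : ι} (hj : j ∈ N i) :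
    T j * (W i)ᵀ * S * (W i * (T j)ᵀ) = Sblk j := by
  have hS' : S = W i * (∑ l ∈ N i, (T l)ᵀ * Sblk l * T l) * (W i)ᵀ := by
    rw [hS, Matrix.mul_sum, Matrix.sum_mul]
    simp only [Matrix.mul_assoc]
  rw [hS']
  simp only [Matrix.mul_assoc, transpose_mul_mul_transpose_of_mem hT hWTW hj]
  simp only [← Matrix.mul_assoc, mul_transpose_mul_of_mem hT hWTW hj]
  rw [Matrix.mul_assoc, sum_transpose_mul_mul_mul_transpose hT Sblk hj,
    ← Matrix.mul_assoc, hT.mul_transpose_self, Matrix.one_mul]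

lemma transpose_mul_inv_mul_mul_inv_mul_eq_sum [∀ i, DecidableEq (b i)] (hT : IsBlockSelection T)
    (hWTW : ∀ i, (W i)ᵀ * W i = ∑ j ∈ N i, (T j)ᵀ * T j) {E : ∀ i, Matrix (a i) (a i) ℝ}
    (hE : ∀ i, (E i).PosDef) {i : ι} {X : Matrix (b i) (b i) ℝ} (hX : X.PosDef)
    (hcomm : ∀ j ∈ N i, X⁻¹ * (W i * (T j)ᵀ) = W i * (T j)ᵀ * (E j)⁻¹)
    {S : Matrix (b i) (b i) ℝ} {Sblk : ∀ j, Matrix (a j) (a j) ℝ}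
    (hS : S = ∑ j ∈ N i, W i * (T j)ᵀ * Sblk j * (T j * (W i)ᵀ)) :
    (W i)ᵀ * (X⁻¹ * S * X⁻¹) * W i = ∑ j ∈ N i, (T j)ᵀ * ((E j)⁻¹ * Sblk j * (E j)⁻¹) * T j := by
  rw [hS, Matrix.mul_sum, Matrix.sum_mul, Matrix.mul_sum, Matrix.sum_mul]
  refine Finset.sum_congr rfl fun j hj => ?_
  have hconj := inv_mul_mul_mul_transpose_mul_inv hX.inv.transpose_eq (hE j).inv.transpose_eq
    (hcomm j hj) (Sblk j)
  rw [transpose_mul, transpose_transpose] at hconj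
  have hWT : (W i)ᵀ * W i * (T j)ᵀ = (T j)ᵀ := by
    rw [Matrix.mul_assoc, transpose_mul_mul_transpose_of_mem hT hWTW hj]
  have hTW : T j * ((W i)ᵀ * W i) = T j := by
    rw [← Matrix.mul_assoc, mul_transpose_mul_of_mem hT hWTW hj]
  rw [hconj]
  simp only [← Matrix.mul_assoc, hWT]
  simp only [Matrix.mul_assoc, hTW]

variable [Fintype ι]

lemma posDef_sum_transpose_mul_mul [DecidableEq k] (hT : IsBlockSelection T)
    (hTsum : ∑ i, (T i)ᵀ * T i = 1) {E : ∀ i, Matrix (a i) (a i) ℝ} (hE : ∀ i, (E i).PosDef) :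
    (∑ i, (T i)ᵀ * E i * T i).PosDef := by
  have hpsd : (∑ i, (T i)ᵀ * E i * T i).PosSemidef :=
    posSemidef_sum _ fun i _ => (hE i).posSemidef.transpose_mul_mul (T i)
  refine hpsd.posDef_iff_isUnit.mpr (IsUnit.of_mul_eq_one (∑ i, (T i)ᵀ * (E i)⁻¹ * T i) ?_)
  rw [Matrix.mul_sum, ← hTsum]
  refine Finset.sum_congr rfl fun i _ => ?_
  rw [← Matrix.mul_assoc, ← Matrix.mul_assoc,
    sum_transpose_mul_mul_mul_transpose hT E (Finset.mem_univ i),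
    mul_nonsing_inv_cancel_right _ _ (hE i).isUnit_det]

lemma mul_mul_transpose_mul_mul_transpose_of_mem (hT : IsBlockSelection T)
    (hWTW : ∀ i, (W i)ᵀ * W i = ∑ j ∈ N i, (T j)ᵀ * T j) (E : ∀ i, Matrix (a i) (a i) ℝ)
    {i j : ι} (hj : j ∈ N i) :
    W i * (∑ l, (T l)ᵀ * E l * T l) * (W i)ᵀ * (W i * (T j)ᵀ) = W i * (T j)ᵀ * E j := by
  rw [Matrix.mul_assoc, Matrix.mul_assoc, transpose_mul_mul_transpose_of_mem hT hWTW hj,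
    sum_transpose_mul_mul_mul_transpose hT E (Finset.mem_univ j), Matrix.mul_assoc]

lemma neg_sum_transpose_mul_relaxation_mul_posSemidef [∀ i, DecidableEq (b i)]
    (hT : IsBlockSelection T)
    (hWTW : ∀ i, (W i)ᵀ * W i = ∑ j ∈ N i, (T j)ᵀ * T j) (hNsym : ∀ i j, j ∈ N i ↔ i ∈ N j)
    {E : ∀ i, Matrix (a i) (a i) ℝ} (hE : ∀ i, (E i).PosDef) {EN : ∀ i, Matrix (b i) (b i) ℝ}
    (hEN : ∀ i, (EN i).PosDef)
    (hcomm : ∀ i, ∀ j ∈ N i, (EN i)⁻¹ * (W i * (T j)ᵀ) = W i * (T j)ᵀ * (E j)⁻¹)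
    {F S : ∀ i, Matrix (b i) (b i) ℝ} (hFS : ∀ i, (S i - F i).PosSemidef)
    {Sblk : ι → ∀ j, Matrix (a j) (a j) ℝ}
    (hSdiag : ∀ i, S i = ∑ j ∈ N i, W i * (T j)ᵀ * Sblk i j * (T j * (W i)ᵀ))
    (hScoup : ∀ i, (-(∑ j ∈ N i, T i * (W j)ᵀ * S j * (W j * (T i)ᵀ))).PosSemidef) :
    (-(∑ i, (W i)ᵀ * ((EN i)⁻¹ * F i * (EN i)⁻¹) * W i)).PosSemidef := by
  have hslack : ∀ i, ((W i)ᵀ * ((EN i)⁻¹ * S i * (EN i)⁻¹ - (EN i)⁻¹ * F i * (EN i)⁻¹)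
      * W i).PosSemidef := fun i => by
    have h := ((hFS i).mul_mul_transpose (EN i)⁻¹).transpose_mul_mul (W i)
    rwa [(hEN i).inv.transpose_eq, Matrix.mul_sub, Matrix.sub_mul] at h
  have hcoup : ∀ j, ((T j)ᵀ * ((E j)⁻¹ * -(∑ i ∈ N j, Sblk i j) * (E j)⁻¹) * T j).PosSemidef :=
    fun j => by
    have h := hScoup j
    rw [Finset.sum_congr rfl fun i hi => mul_transpose_mul_mul_mul_transpose_eq_of_mem hT
      hWTW (hSdiag i) ((hNsym i j).2 hi)] at h
    have h' := (h.mul_mul_transpose (E j)⁻¹).transpose_mul_mul (T j)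
    rwa [(hE j).inv.transpose_eq] at h'
  have hswap : ∑ i, (W i)ᵀ * ((EN i)⁻¹ * S i * (EN i)⁻¹) * W i
      = ∑ j, (T j)ᵀ * ((E j)⁻¹ * (∑ i ∈ N j, Sblk i j) * (E j)⁻¹) * T j := by
    rw [Finset.sum_congr rfl fun i _ => transpose_mul_inv_mul_mul_inv_mul_eq_sum hT hWTW
      hE (hEN i) (hcomm i) (hSdiag i),
      Finset.sum_comm' (t' := Finset.univ) (s' := N) fun i j => by simp [hNsym i j]]
    simp only [Matrix.mul_sum, Matrix.sum_mul]
  have key : -(∑ i, (W i)ᵀ * ((EN i)⁻¹ * F i * (EN i)⁻¹) * W i)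
      = ∑ i, (W i)ᵀ * ((EN i)⁻¹ * S i * (EN i)⁻¹ - (EN i)⁻¹ * F i * (EN i)⁻¹) * W i
        + ∑ j, (T j)ᵀ * ((E j)⁻¹ * -(∑ i ∈ N j, Sblk i j) * (E j)⁻¹) * T j := by
    simp only [Matrix.mul_sub, Matrix.sub_mul, Finset.sum_sub_distrib, hswap, Matrix.mul_neg,
      Matrix.neg_mul, Finset.sum_neg_distrib]
    abel
  rw [key]
  exact (posSemidef_sum _ fun i _ => hslack i).add (posSemidef_sum _ fun j _ => hcoup j)

end Selection

theorem stmt3_general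
    {ι : Type} [Fintype ι]
    (n : ℕ) (ni nN : ι → ℕ) (N : ι → Finset ι)
    (T : ∀ i : ι, Matrix (Fin (ni i)) (Fin n) ℝ)
    (W : ∀ i : ι, Matrix (Fin (nN i)) (Fin n) ℝ)
    (hNself : ∀ i : ι, i ∈ N i)
    (hTT : ∀ i : ι, T i * (T i)ᵀ = 1)
    (hTTzero : ∀ i j : ι, i ≠ j → T i * (T j)ᵀ = 0)
    (hTsum : ∑ i : ι, (T i)ᵀ * T i = 1)
    (hWW : ∀ i : ι, W i * (W i)ᵀ = 1)
    (hWTW : ∀ i : ι, (W i)ᵀ * W i = ∑ j ∈ N i, (T j)ᵀ * T j)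
    (hNsym : ∀ i j : ι, j ∈ N i ↔ i ∈ N j)
    (q m p nd : ι → ℕ)
    (Φ : ∀ i : ι, Matrix (Fin (nd i)) (Fin (nd i)) ℝ)
    (E : ∀ i : ι, Matrix (Fin (ni i)) (Fin (ni i)) ℝ) (hE : ∀ i : ι, (E i).PosDef)
    (Pbar : ∀ i : ι, Matrix (Fin (ni i) ⊕ Fin (q i)) (Fin (ni i) ⊕ Fin (q i)) ℝ)
    (γ : ι → ℝ)
    (F S : ∀ i : ι, Matrix (Fin (nN i)) (Fin (nN i)) ℝ)
    (Y : ∀ i : ι, Matrix (Fin (m i)) (Fin (nN i)) ℝ)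
    (A' : ∀ i : ι, Matrix (Fin (ni i)) (Fin (nN i)) ℝ)
    (B' : ∀ i : ι, Matrix (Fin (ni i)) (Fin (m i)) ℝ)
    (Bd : ∀ i : ι, Matrix (Fin (ni i)) (Fin (nd i)) ℝ)
    (Cz : ∀ i : ι, Matrix (Fin (q i)) (Fin (nN i)) ℝ)
    (Dz : ∀ i : ι, Matrix (Fin (q i)) (Fin (m i)) ℝ)
    (Cy : ∀ i : ι, Matrix (Fin (p i)) (Fin (nN i)) ℝ)
    (Dy : ∀ i : ι, Matrix (Fin (p i)) (Fin (m i)) ℝ)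
    (Eglob : Matrix (Fin n) (Fin n) ℝ)
    (hEglob : Eglob = ∑ j : ι, (T j)ᵀ * E j * T j)
    (EN : ∀ i : ι, Matrix (Fin (nN i)) (Fin (nN i)) ℝ)
    (hEN : ∀ i : ι, EN i = W i * Eglob * (W i)ᵀ)
    (Ebar : ∀ i : ι, Matrix (Fin (nN i)) (Fin (nN i)) ℝ)
    (hEbar : ∀ i : ι, Ebar i = W i * (T i)ᵀ * E i * (T i * (W i)ᵀ))
    (J : ∀ i : ι, Matrix (Fin (ni i) ⊕ Fin (q i)) (Fin (nN i)) ℝ)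
    (hJ : ∀ i : ι, J i = fromRows (A' i * EN i + B' i * Y i) (Cz i * EN i + Dz i * Y i))
    (H : ∀ i : ι, Matrix (Fin (p i)) (Fin (nN i)) ℝ)
    (hH : ∀ i : ι, H i = Cy i * EN i + Dy i * Y i)
    (hTrΦ : ∀ i : ι, (Φ i).trace < γ i ^ 2)
    (hLMIb : ∀ i : ι, (fromBlocks (Φ i) ((Bd i)ᵀ) (Bd i) (E i)).PosDef)
    (hLMIc : ∀ i : ι,
      (-(fromBlocks
          (fromBlocks (Pbar i + fromBlocks (-(E i)) 0 0 0) (J i) ((J i)ᵀ) (-(Ebar i) - F i))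
          (fromRows 0 ((H i)ᵀ))
          (Matrix.fromCols 0 (H i))
          (-1))).PosDef)
    (hFS : ∀ i : ι, (S i - F i).PosSemidef)
    (Sblk : ∀ i j : ι, Matrix (Fin (ni j)) (Fin (ni j)) ℝ)
    (hSdiag : ∀ i : ι, S i = ∑ j ∈ N i, W i * (T j)ᵀ * Sblk i j * (T j * (W i)ᵀ))
    (hScoup : ∀ i : ι, (-(∑ j ∈ N i, T i * (W j)ᵀ * S j * (W j * (T i)ᵀ))).PosSemidef)
    (K : ∀ i : ι, Matrix (Fin (m i)) (Fin (nN i)) ℝ)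
    (hK : ∀ i : ι, K i = Y i * (EN i)⁻¹)
    (Θ : ∀ i : ι, Matrix (Fin (nN i)) (Fin (nN i)) ℝ)
    (hΘ : ∀ i : ι, Θ i = (EN i)⁻¹ * F i * (EN i)⁻¹)
    (Δ : ∀ i : ι, Matrix (Fin (ni i)) (Fin (q i)) ℝ)
    (hΔ : ∀ i : ι,
      ((Matrix.fromCols (1 : Matrix (Fin (ni i)) (Fin (ni i)) ℝ) (Δ i)) * Pbar i * (Matrix.fromCols (1 : Matrix (Fin (ni i)) (Fin (ni i)) ℝ) (Δ i))ᵀ).PosSemidef)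
    :
    (∀ i : ι,
      (Θ i - ((A' i + B' i * K i + Δ i * (Cz i + Dz i * K i))ᵀ * (E i)⁻¹ *
            (A' i + B' i * K i + Δ i * (Cz i + Dz i * K i))
          - W i * (T i)ᵀ * (E i)⁻¹ * (T i * (W i)ᵀ)
          + (Cy i + Dy i * K i)ᵀ * (Cy i + Dy i * K i))).PosDef ∧
      ((Bd i)ᵀ * (E i)⁻¹ * Bd i).trace < γ i ^ 2) ∧
    (-(∑ i : ι, (W i)ᵀ * Θ i * W i)).PosSemidef := by
  have hsel : IsBlockSelection T := ⟨hTT, hTTzero⟩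
  subst hEglob
  have hENpd : ∀ i, (EN i).PosDef := fun i => hEN i ▸
    (posDef_sum_transpose_mul_mul hsel hTsum hE).mul_mul_transpose_of_mul_eq_one (hWW i)
  have hcomm : ∀ i, ∀ j ∈ N i, (EN i)⁻¹ * (W i * (T j)ᵀ) = W i * (T j)ᵀ * (E j)⁻¹ :=
    fun i j hj => inv_mul_eq_mul_inv_of_mul_eq_mul (hENpd i).isUnit_det (hE j).isUnit_det
      (hEN i ▸ mul_mul_transpose_mul_mul_transpose_of_mem hsel hWTW E hj)
  refine ⟨fun i => ⟨?_, trace_transpose_mul_inv_mul_lt (hE i) (hLMIb i) (hTrΦ i)⟩, ?_⟩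
  · have hEbarConj : (EN i)⁻¹ * Ebar i * (EN i)⁻¹ = W i * (T i)ᵀ * (E i)⁻¹ * (T i * (W i)ᵀ) := by
      have h := inv_mul_mul_mul_transpose_mul_inv (hENpd i).inv.transpose_eq
        (hE i).inv.transpose_eq (hcomm i i (hNself i)) (E i)
      rwa [transpose_mul, transpose_transpose, nonsing_inv_mul _ (hE i).isUnit_det,
        Matrix.one_mul, ← hEbar] at h
    have h := posDef_closedLoop_of_lmi (hE i) (hENpd i) (hJ i ▸ hH i ▸ hLMIc i) (hΔ i)
    rwa [← hK, ← hΘ, hEbarConj] at h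
  · simpa only [hΘ] using neg_sum_transpose_mul_relaxation_mul_posSemidef hsel hWTW hNsym
      hE hENpd hcomm hFS hSdiag hScoup

/-- Theorem 1: feasibility of the distributed gray-box synthesis LMIs implies the
decomposed H₂-design conditions robustly for all admissible uncertainties. -/
theorem stmt3
    {ι : Type} [Fintype ι] [DecidableEq ι]
    (n : ℕ) (ni nN : ι → ℕ) (N : ι → Finset ι)
    (T : ∀ i : ι, Matrix (Fin (ni i)) (Fin n) ℝ)
    (W : ∀ i : ι, Matrix (Fin (nN i)) (Fin n) ℝ)
    (hNself : ∀ i : ι, i ∈ N i)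
    (hn : n = ∑ i : ι, ni i)
    (hnN : ∀ i : ι, nN i = ∑ j ∈ N i, ni j)
    (hTT : ∀ i : ι, T i * (T i)ᵀ = 1)
    (hTTzero : ∀ i j : ι, i ≠ j → T i * (T j)ᵀ = 0)
    (hTsum : ∑ i : ι, (T i)ᵀ * T i = 1)
    (hWW : ∀ i : ι, W i * (W i)ᵀ = 1)
    (hWTW : ∀ i : ι, (W i)ᵀ * W i = ∑ j ∈ N i, (T j)ᵀ * T j)
    (hNsym : ∀ i j : ι, j ∈ N i ↔ i ∈ N j)
    (q m p nd : ι → ℕ)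
    (Φ : ∀ i : ι, Matrix (Fin (nd i)) (Fin (nd i)) ℝ) (hΦ : ∀ i : ι, (Φ i).IsSymm)
    (E : ∀ i : ι, Matrix (Fin (ni i)) (Fin (ni i)) ℝ) (hE : ∀ i : ι, (E i).PosDef)
    (Pbar : ∀ i : ι, Matrix (Fin (ni i) ⊕ Fin (q i)) (Fin (ni i) ⊕ Fin (q i)) ℝ)
    (hPbar : ∀ i : ι, (Pbar i).IsSymm)
    (γ : ι → ℝ) (hγ : ∀ i : ι, 0 < γ i)
    (F S : ∀ i : ι, Matrix (Fin (nN i)) (Fin (nN i)) ℝ)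
    (hFsymm : ∀ i : ι, (F i).IsSymm) (hSsymm : ∀ i : ι, (S i).IsSymm)
    (Y : ∀ i : ι, Matrix (Fin (m i)) (Fin (nN i)) ℝ)
    (A' : ∀ i : ι, Matrix (Fin (ni i)) (Fin (nN i)) ℝ)
    (B' : ∀ i : ι, Matrix (Fin (ni i)) (Fin (m i)) ℝ)
    (Bd : ∀ i : ι, Matrix (Fin (ni i)) (Fin (nd i)) ℝ)
    (Cz : ∀ i : ι, Matrix (Fin (q i)) (Fin (nN i)) ℝ)
    (Dz : ∀ i : ι, Matrix (Fin (q i)) (Fin (m i)) ℝ)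
    (Cy : ∀ i : ι, Matrix (Fin (p i)) (Fin (nN i)) ℝ)
    (Dy : ∀ i : ι, Matrix (Fin (p i)) (Fin (m i)) ℝ)
    (Eglob : Matrix (Fin n) (Fin n) ℝ)
    (hEglob : Eglob = ∑ j : ι, (T j)ᵀ * E j * T j)
    (EN : ∀ i : ι, Matrix (Fin (nN i)) (Fin (nN i)) ℝ)
    (hEN : ∀ i : ι, EN i = W i * Eglob * (W i)ᵀ)
    (Ebar : ∀ i : ι, Matrix (Fin (nN i)) (Fin (nN i)) ℝ)
    (hEbar : ∀ i : ι, Ebar i = W i * (T i)ᵀ * E i * (T i * (W i)ᵀ))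
    (J : ∀ i : ι, Matrix (Fin (ni i) ⊕ Fin (q i)) (Fin (nN i)) ℝ)
    (hJ : ∀ i : ι, J i = fromRows (A' i * EN i + B' i * Y i) (Cz i * EN i + Dz i * Y i))
    (H : ∀ i : ι, Matrix (Fin (p i)) (Fin (nN i)) ℝ)
    (hH : ∀ i : ι, H i = Cy i * EN i + Dy i * Y i)
    (hTrΦ : ∀ i : ι, (Φ i).trace < γ i ^ 2)
    (hLMIb : ∀ i : ι, (fromBlocks (Φ i) ((Bd i)ᵀ) (Bd i) (E i)).PosDef)
    (hLMIc : ∀ i : ι,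
      (-(fromBlocks
          (fromBlocks (Pbar i + fromBlocks (-(E i)) 0 0 0) (J i) ((J i)ᵀ) (-(Ebar i) - F i))
          (fromRows 0 ((H i)ᵀ))
          (Matrix.fromCols 0 (H i))
          (-1))).PosDef)
    (hFS : ∀ i : ι, (S i - F i).PosSemidef)
    (Sblk : ∀ i j : ι, Matrix (Fin (ni j)) (Fin (ni j)) ℝ)
    (hSblkSymm : ∀ i j : ι, (Sblk i j).IsSymm)
    (hSdiag : ∀ i : ι, S i = ∑ j ∈ N i, W i * (T j)ᵀ * Sblk i j * (T j * (W i)ᵀ))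
    (hScoup : ∀ i : ι, (-(∑ j ∈ N i, T i * (W j)ᵀ * S j * (W j * (T i)ᵀ))).PosSemidef)
    (K : ∀ i : ι, Matrix (Fin (m i)) (Fin (nN i)) ℝ)
    (hK : ∀ i : ι, K i = Y i * (EN i)⁻¹)
    (Θ : ∀ i : ι, Matrix (Fin (nN i)) (Fin (nN i)) ℝ)
    (hΘ : ∀ i : ι, Θ i = (EN i)⁻¹ * F i * (EN i)⁻¹)
    (Δ : ∀ i : ι, Matrix (Fin (ni i)) (Fin (q i)) ℝ)
    (hΔ : ∀ i : ι,
      ((Matrix.fromCols (1 : Matrix (Fin (ni i)) (Fin (ni i)) ℝ) (Δ i)) * Pbar i * (Matrix.fromCols (1 : Matrix (Fin (ni i)) (Fin (ni i)) ℝ) (Δ i))ᵀ).PosSemidef)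
    :
    (∀ i : ι,
      (Θ i - ((A' i + B' i * K i + Δ i * (Cz i + Dz i * K i))ᵀ * (E i)⁻¹ *
            (A' i + B' i * K i + Δ i * (Cz i + Dz i * K i))
          - W i * (T i)ᵀ * (E i)⁻¹ * (T i * (W i)ᵀ)
          + (Cy i + Dy i * K i)ᵀ * (Cy i + Dy i * K i))).PosDef ∧
      ((Bd i)ᵀ * (E i)⁻¹ * Bd i).trace < γ i ^ 2) ∧
    (-(∑ i : ι, (W i)ᵀ * Θ i * W i)).PosSemidef :=
  stmt3_general n ni nN N T W hNself hTT hTTzero hTsum hWW hWTW hNsym q m p nd Φ E hE Pbar γ F S Y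
    A' B' Bd Cz Dz Cy Dy Eglob hEglob EN hEN Ebar hEbar J hJ H hH hTrΦ hLMIb hLMIc hFS Sblk hSdiag
    hScoup K hK Θ hΘ Δ hΔ
end

section
/- Let P̄ ∈ ℝ^{(r+q)×(r+q)} be symmetric, E ∈ ℝ^{r×r} symmetric positive definite, M ∈ ℝ^{ν×ν} symmetric positive definite, N₁ ∈ ℝ^{r×ν} and N₂ ∈ ℝ^{q×ν}. Define L := [[I_r, N₁],[0, N₂]] ∈ ℝ^{(r+q)×(r+ν)} (block matrix with rows (I_r, N₁) and (0, N₂)). If P̄ + L · blkdiag(−E, M⁻¹) · Lᵀ ≺ 0, then for every Δ ∈ ℝ^{r×q} satisfying [I_r, Δ] · P̄ · [I_r, Δ]ᵀ ⪰ 0, it holds that (N₁ + Δ N₂) M⁻¹ (N₁ + Δ N₂)ᵀ ≺ E. -/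
/-!
Congruence with `S = [I, Δ]`, whose rows are independent, keeps the LMI strict:
`S (-P̄) Sᵀ - (S L) blkdiag(-E, M⁻¹) (S L)ᵀ ≻ 0`. Adding the multiplier condition
`S P̄ Sᵀ ⪰ 0` removes `P̄`, and `S L = [I, N₁ + Δ N₂]` turns the remaining term into
`E - (N₁ + Δ N₂) M⁻¹ (N₁ + Δ N₂)ᵀ`.
-/

open Matrix

section Blocks

variable {l m n R : Type*} [CommRing R]

lemma vecMul_fromCols_one_injective [Fintype m] [DecidableEq m] (Δ : Matrix m n R) :
    Function.Injective (fromCols (1 : Matrix m m R) Δ).vecMul := by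
  intro x y hxy
  simpa using congrArg (fun v => v ∘ Sum.inl) hxy

lemma fromCols_one_mul_fromBlocks [Fintype m] [Fintype n] [DecidableEq m] (Δ : Matrix m n R)
    (N₁ : Matrix m l R) (N₂ : Matrix n l R) :
    fromCols (1 : Matrix m m R) Δ * fromBlocks (1 : Matrix m m R) N₁ 0 N₂ =
      fromCols 1 (N₁ + Δ * N₂) := by
  simp [fromCols_mul_fromBlocks]

lemma fromCols_mul_fromBlocks_diagonal_mul_transpose [Fintype l] [Fintype n]
    (X : Matrix m n R) (K : Matrix m l R) (A : Matrix n n R) (B : Matrix l l R) :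
    fromCols X K * fromBlocks A 0 0 B * (fromCols X K)ᵀ = X * A * Xᵀ + K * B * Kᵀ := by
  simp [transpose_fromCols, fromCols_mul_fromBlocks, fromCols_mul_fromRows]

end Blocks

lemma Matrix.PosDef.neg_mul_mul_transpose_of_posSemidef {k m n : Type*} [Fintype k]
    [Fintype m] [Fintype n] {P : Matrix n n ℝ} {L : Matrix n k ℝ} {D : Matrix k k ℝ}
    (hLMI : (-(P + L * D * Lᵀ)).PosDef) {S : Matrix m n ℝ} (hS : Function.Injective S.vecMul)
    (hSP : (S * P * Sᵀ).PosSemidef) :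
    (-(S * L * D * (S * L)ᵀ)).PosDef := by
  have h := (hLMI.mul_mul_conjTranspose_same hS).add_posSemidef hSP
  rw [conjTranspose_eq_transpose_of_trivial, Matrix.mul_neg, Matrix.neg_mul, Matrix.mul_add,
    Matrix.add_mul, neg_add, neg_add_cancel_comm] at h
  simpa only [transpose_mul, Matrix.mul_assoc] using h

theorem stmt4_general
    (r q ν : ℕ)
    (Pbar : Matrix (Fin r ⊕ Fin q) (Fin r ⊕ Fin q) ℝ)
    (E : Matrix (Fin r) (Fin r) ℝ)
    (M : Matrix (Fin ν) (Fin ν) ℝ)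
    (N₁ : Matrix (Fin r) (Fin ν) ℝ) (N₂ : Matrix (Fin q) (Fin ν) ℝ)
    (hLMI : (-(Pbar + (Matrix.fromBlocks (1 : Matrix (Fin r) (Fin r) ℝ) N₁ 0 N₂) * (Matrix.fromBlocks (-E) 0 0 M⁻¹) *
        (Matrix.fromBlocks (1 : Matrix (Fin r) (Fin r) ℝ) N₁ 0 N₂)ᵀ)).PosDef) :
    ∀ Δ : Matrix (Fin r) (Fin q) ℝ,
      ((fromCols (1 : Matrix (Fin r) (Fin r) ℝ) Δ) * Pbar * (fromCols (1 : Matrix (Fin r) (Fin r) ℝ) Δ)ᵀ).PosSemidef →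
      (E - (N₁ + Δ * N₂) * M⁻¹ * (N₁ + Δ * N₂)ᵀ).PosDef := by
  intro Δ hΔ
  have h := hLMI.neg_mul_mul_transpose_of_posSemidef (vecMul_fromCols_one_injective Δ) hΔ
  rwa [fromCols_one_mul_fromBlocks, fromCols_mul_fromBlocks_diagonal_mul_transpose,
    transpose_one, Matrix.one_mul, Matrix.mul_one, neg_add, neg_neg, ← sub_eq_add_neg] at h

/-- Full-block S-procedure instance used in the proof of Theorem 1. -/
theorem stmt4
    (r q ν : ℕ)
    (Pbar : Matrix (Fin r ⊕ Fin q) (Fin r ⊕ Fin q) ℝ) (hPbar : Pbar.IsSymm)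
    (E : Matrix (Fin r) (Fin r) ℝ) (hE : E.PosDef)
    (M : Matrix (Fin ν) (Fin ν) ℝ) (hM : M.PosDef)
    (N₁ : Matrix (Fin r) (Fin ν) ℝ) (N₂ : Matrix (Fin q) (Fin ν) ℝ)
    (hLMI : (-(Pbar + (Matrix.fromBlocks (1 : Matrix (Fin r) (Fin r) ℝ) N₁ 0 N₂) * (Matrix.fromBlocks (-E) 0 0 M⁻¹) *
        (Matrix.fromBlocks (1 : Matrix (Fin r) (Fin r) ℝ) N₁ 0 N₂)ᵀ)).PosDef) :
    ∀ Δ : Matrix (Fin r) (Fin q) ℝ,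
      ((fromCols (1 : Matrix (Fin r) (Fin r) ℝ) Δ) * Pbar * (fromCols (1 : Matrix (Fin r) (Fin r) ℝ) Δ)ᵀ).PosSemidef →
      (E - (N₁ + Δ * N₂) * M⁻¹ * (N₁ + Δ * N₂)ᵀ).PosDef :=
  stmt4_general r q ν Pbar E M N₁ N₂ hLMI
end

section
/- Assume the Setup and suppose the neighborhood relation is symmetric: j ∈ N_i if and only if i ∈ N_j. For each i ∈ V let F_i, S_i ∈ ℝ^{n_{N_i}×n_{N_i}} be symmetric matrices such that: (a) F_i ⪯ S_i; (b) S_i is block-diagonal with respect to the subsystem partition of the neighborhood, i.e., S_i = Σ_{j∈N_i} (W_i T_jᵀ) S_j^{(i)} (T_j W_iᵀ) for some symmetric matrices S_j^{(i)} ∈ ℝ^{n_j×n_j}; and (c) for every i ∈ V, Σ_{j∈N_i} T_i W_jᵀ S_j W_j T_iᵀ ⪯ 0. Then Σ_{i∈V} W_iᵀ F_i W_i ⪯ 0. -/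
open Matrix

lemma psd_sum' {α : Type*} {m : ℕ} (s : Finset α)
    (f : α → Matrix (Fin m) (Fin m) ℝ)
    (h : ∀ a ∈ s, (f a).PosSemidef) : (∑ a ∈ s, f a).PosSemidef :=
  Finset.sum_induction f _ (fun _ _ ha hb => ha.add hb) Matrix.PosSemidef.zero h

/-- Aggregation argument (Conte et al.): local conditions with block-diagonal coupling
matrices S_i are sufficient for the globally coupled relaxation constraint. -/
theorem stmt6
    {ι : Type} [Fintype ι] [DecidableEq ι]
    (n : ℕ) (ni nN : ι → ℕ) (N : ι → Finset ι)
    (T : ∀ i : ι, Matrix (Fin (ni i)) (Fin n) ℝ)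
    (W : ∀ i : ι, Matrix (Fin (nN i)) (Fin n) ℝ)
    (hNself : ∀ i : ι, i ∈ N i)
    (hn : n = ∑ i : ι, ni i)
    (hnN : ∀ i : ι, nN i = ∑ j ∈ N i, ni j)
    (hTT : ∀ i : ι, T i * (T i)ᵀ = 1)
    (hTTzero : ∀ i j : ι, i ≠ j → T i * (T j)ᵀ = 0)
    (hTsum : ∑ i : ι, (T i)ᵀ * T i = 1)
    (hWW : ∀ i : ι, W i * (W i)ᵀ = 1)
    (hWTW : ∀ i : ι, (W i)ᵀ * W i = ∑ j ∈ N i, (T j)ᵀ * T j)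
    (hNsym : ∀ i j : ι, j ∈ N i ↔ i ∈ N j)
    (F S : ∀ i : ι, Matrix (Fin (nN i)) (Fin (nN i)) ℝ)
    (hFsymm : ∀ i : ι, (F i).IsSymm) (hSsymm : ∀ i : ι, (S i).IsSymm)
    (hFS : ∀ i : ι, (S i - F i).PosSemidef)
    (Sblk : ∀ i j : ι, Matrix (Fin (ni j)) (Fin (ni j)) ℝ)
    (hSblkSymm : ∀ i j : ι, (Sblk i j).IsSymm)
    (hSdiag : ∀ i : ι, S i = ∑ j ∈ N i, W i * (T j)ᵀ * Sblk i j * (T j * (W i)ᵀ))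
    (hScoup : ∀ i : ι, (-(∑ j ∈ N i, T i * (W j)ᵀ * S j * (W j * (T i)ᵀ))).PosSemidef) :
    (-(∑ i : ι, (W i)ᵀ * F i * W i)).PosSemidef := by
  classical
  -- projection identities
  have hproj : ∀ i j, j ∈ N i → (W i)ᵀ * W i * (T j)ᵀ = (T j)ᵀ := by
    intro i j hj
    rw [hWTW, Matrix.sum_mul, Finset.sum_eq_single j]
    · rw [Matrix.mul_assoc, hTT, Matrix.mul_one]
    · intro k _ hkj
      rw [Matrix.mul_assoc, hTTzero k j hkj, Matrix.mul_zero]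
    · exact fun h => absurd hj h
  have hprojL : ∀ i j, j ∈ N i → T j * ((W i)ᵀ * W i) = T j := by
    intro i j hj
    have h := congrArg Matrix.transpose (hproj i j hj)
    simpa [Matrix.transpose_mul, Matrix.mul_assoc] using h
  -- block decomposition of WᵀSW
  have hA : ∀ i, (W i)ᵀ * S i * W i = ∑ j ∈ N i, (T j)ᵀ * Sblk i j * T j := by
    intro i
    conv_lhs => rw [hSdiag i]
    rw [Matrix.mul_sum, Matrix.sum_mul]
    refine Finset.sum_congr rfl fun j hj => ?_
    simp only [Matrix.mul_assoc]
    rw [hprojL i j hj, ← Matrix.mul_assoc ((W i)ᵀ) (W i),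
      ← Matrix.mul_assoc ((W i)ᵀ * W i) ((T j)ᵀ), hproj i j hj]
  have hB : ∀ i j, j ∈ N i →
      T j * ((W i)ᵀ * S i * W i) * (T j)ᵀ = Sblk i j := by
    intro i j hj
    rw [hA i, Matrix.mul_sum, Matrix.sum_mul, Finset.sum_eq_single j]
    · simp only [← Matrix.mul_assoc]
      rw [hTT, Matrix.one_mul, Matrix.mul_assoc, hTT, Matrix.mul_one]
    · intro k _ hkj
      simp only [← Matrix.mul_assoc]
      rw [hTTzero j k hkj.symm]
      simp
    · exact fun h => absurd hj h
  -- swap double sum using neighborhood symmetry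
  have hswap : ∑ i : ι, (W i)ᵀ * S i * W i
      = ∑ j : ι, (T j)ᵀ * (∑ i ∈ N j, T j * ((W i)ᵀ * S i * W i) * (T j)ᵀ) * T j := by
    have e : ∀ j, (T j)ᵀ * (∑ i ∈ N j, T j * ((W i)ᵀ * S i * W i) * (T j)ᵀ) * T j
        = ∑ i ∈ N j, (T j)ᵀ * Sblk i j * T j := by
      intro j
      rw [Matrix.mul_sum, Matrix.sum_mul]
      refine Finset.sum_congr rfl fun i hi => ?_
      rw [hB i j ((hNsym i j).mpr hi)]
    simp only [e]
    calc ∑ i : ι, (W i)ᵀ * S i * W i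
        = ∑ i : ι, ∑ j ∈ N i, (T j)ᵀ * Sblk i j * T j := by
          exact Finset.sum_congr rfl fun i _ => hA i
      _ = ∑ j : ι, ∑ i ∈ N j, (T j)ᵀ * Sblk i j * T j := by
          refine Finset.sum_comm' fun x y => ?_
          simp [hNsym x y]
  -- main decomposition
  have key : -(∑ i : ι, (W i)ᵀ * F i * W i)
      = (∑ i : ι, (W i)ᵀ * (S i - F i) * W i)
        + ∑ j : ι, (T j)ᵀ * (-(∑ i ∈ N j, T j * (W i)ᵀ * S i * (W i * (T j)ᵀ))) * T j := by
    have e1 : ∑ i : ι, (W i)ᵀ * (S i - F i) * W i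
        = (∑ i : ι, (W i)ᵀ * S i * W i) - ∑ i : ι, (W i)ᵀ * F i * W i := by
      rw [← Finset.sum_sub_distrib]
      exact Finset.sum_congr rfl fun i _ => by rw [Matrix.mul_sub, Matrix.sub_mul]
    have e2 : ∑ j : ι, (T j)ᵀ * (-(∑ i ∈ N j, T j * (W i)ᵀ * S i * (W i * (T j)ᵀ))) * T j
        = -(∑ i : ι, (W i)ᵀ * S i * W i) := by
      rw [hswap, ← Finset.sum_neg_distrib]
      refine Finset.sum_congr rfl fun j _ => ?_
      simp only [Matrix.mul_neg, Matrix.neg_mul, Matrix.mul_assoc]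
    rw [e1, e2]
    abel
  rw [key]
  refine Matrix.PosSemidef.add ?_ ?_
  · refine psd_sum' _ _ fun i _ => ?_
    have h := (hFS i).conjTranspose_mul_mul_same (W i)
    simpa [Matrix.conjTranspose_eq_transpose_of_trivial] using h
  · refine psd_sum' _ _ fun j _ => ?_
    have h := (hScoup j).conjTranspose_mul_mul_same (T j)
    simpa [Matrix.conjTranspose_eq_transpose_of_trivial] using h
end

section
/- Assume the Setup. For each j ∈ V let E_j ∈ ℝ^{n_j×n_j} be symmetric positive definite, and set E := Σ_{j∈V} T_jᵀ E_j T_j and, for each i ∈ V, E_{N_i} := W_i E W_iᵀ. Then: (a) for every i ∈ V, E_{N_i} is invertible with E_{N_i}⁻¹ = W_i E⁻¹ W_iᵀ; and (b) for any symmetric matrices F_i ∈ ℝ^{n_{N_i}×n_{N_i}}, i ∈ V, one has Σ_{i∈V} W_iᵀ E_{N_i}⁻¹ F_i E_{N_i}⁻¹ W_i = E⁻¹ (Σ_{i∈V} W_iᵀ F_i W_i) E⁻¹; consequently, if Σ_{i∈V} W_iᵀ F_i W_i ⪯ 0, then Σ_{i∈V} W_iᵀ (E_{N_i}⁻¹ F_i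 E_{N_i}⁻¹) W_i ⪯ 0. -/
open Matrix

/-- Congruence identity used in the proof of Theorem 1 to convert the relaxation
constraint from the F-variables to the Θ-variables. -/
theorem stmt7
    {ι : Type} [Fintype ι] [DecidableEq ι]
    (n : ℕ) (ni nN : ι → ℕ) (N : ι → Finset ι)
    (T : ∀ i : ι, Matrix (Fin (ni i)) (Fin n) ℝ)
    (W : ∀ i : ι, Matrix (Fin (nN i)) (Fin n) ℝ)
    (hNself : ∀ i : ι, i ∈ N i)
    (hn : n = ∑ i : ι, ni i)
    (hnN : ∀ i : ι, nN i = ∑ j ∈ N i, ni j)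
    (hTT : ∀ i : ι, T i * (T i)ᵀ = 1)
    (hTTzero : ∀ i j : ι, i ≠ j → T i * (T j)ᵀ = 0)
    (hTsum : ∑ i : ι, (T i)ᵀ * T i = 1)
    (hWW : ∀ i : ι, W i * (W i)ᵀ = 1)
    (hWTW : ∀ i : ι, (W i)ᵀ * W i = ∑ j ∈ N i, (T j)ᵀ * T j)
    (E : ∀ i : ι, Matrix (Fin (ni i)) (Fin (ni i)) ℝ) (hE : ∀ i : ι, (E i).PosDef)
    (Eglob : Matrix (Fin n) (Fin n) ℝ)
    (hEglob : Eglob = ∑ j : ι, (T j)ᵀ * E j * T j)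
    (EN : ∀ i : ι, Matrix (Fin (nN i)) (Fin (nN i)) ℝ)
    (hEN : ∀ i : ι, EN i = W i * Eglob * (W i)ᵀ) :
    (∀ i : ι, IsUnit (EN i) ∧ (EN i)⁻¹ = W i * Eglob⁻¹ * (W i)ᵀ) ∧
    (∀ F : ∀ i : ι, Matrix (Fin (nN i)) (Fin (nN i)) ℝ, (∀ i : ι, (F i).IsSymm) →
      (∑ i : ι, (W i)ᵀ * ((EN i)⁻¹ * F i * (EN i)⁻¹) * W i
        = Eglob⁻¹ * (∑ i : ι, (W i)ᵀ * F i * W i) * Eglob⁻¹) ∧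
      ((-(∑ i : ι, (W i)ᵀ * F i * W i)).PosSemidef →
        (-(∑ i : ι, (W i)ᵀ * ((EN i)⁻¹ * F i * (EN i)⁻¹) * W i)).PosSemidef)) := by
  -- key multiplication lemma for block sums
  have key : ∀ (s t : Finset ι) (A B : ∀ j : ι, Matrix (Fin (ni j)) (Fin (ni j)) ℝ),
      (∑ j ∈ s, (T j)ᵀ * A j * T j) * (∑ k ∈ t, (T k)ᵀ * B k * T k)
        = ∑ j ∈ s ∩ t, (T j)ᵀ * (A j * B j) * T j := by
    intro s t A B
    rw [Finset.sum_mul_sum, ← Finset.sum_ite_mem]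
    refine Finset.sum_congr rfl fun j _ => ?_
    by_cases h : j ∈ t
    · rw [if_pos h, Finset.sum_eq_single_of_mem j h]
      · have h1 : T j * ((T j)ᵀ * (B j * T j)) = B j * T j := by
          rw [← Matrix.mul_assoc, hTT j, Matrix.one_mul]
        simp only [Matrix.mul_assoc, h1]
      · intro k hk hkj
        have h1 : T j * ((T k)ᵀ * (B k * T k)) = 0 := by
          rw [← Matrix.mul_assoc, hTTzero j k (Ne.symm hkj), Matrix.zero_mul]
        simp only [Matrix.mul_assoc, h1, Matrix.mul_zero]
    · rw [if_neg h]
      refine Finset.sum_eq_zero fun k hk => ?_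
      have h1 : T j * ((T k)ᵀ * (B k * T k)) = 0 := by
        rw [← Matrix.mul_assoc, hTTzero j k (fun e => h (e ▸ hk)), Matrix.zero_mul]
      simp only [Matrix.mul_assoc, h1, Matrix.mul_zero]
  -- each E j is invertible
  have hEinv : ∀ j : ι, E j * (E j)⁻¹ = 1 := fun j =>
    mul_nonsing_inv _ (isUnit_iff_ne_zero.2 (hE j).det_pos.ne')
  have hEinv' : ∀ j : ι, (E j)⁻¹ * E j = 1 := fun j =>
    nonsing_inv_mul _ (isUnit_iff_ne_zero.2 (hE j).det_pos.ne')
  -- candidate global inverse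
  set G : Matrix (Fin n) (Fin n) ℝ := ∑ j : ι, (T j)ᵀ * (E j)⁻¹ * T j with hG
  have hEG : Eglob * G = 1 := by
    rw [hEglob, hG, key, Finset.univ_inter]
    simp only [hEinv, Matrix.mul_one]
    exact hTsum
  have hEglobInv : Eglob⁻¹ = G := inv_eq_right_inv hEG
  -- the projectors
  have hP' : ∀ i : ι, (W i)ᵀ * W i
      = ∑ j ∈ N i, (T j)ᵀ * (1 : Matrix (Fin (ni j)) (Fin (ni j)) ℝ) * T j := by
    intro i; rw [hWTW i]
    exact Finset.sum_congr rfl fun j _ => by rw [Matrix.mul_one]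
  have hGP : ∀ i : ι, G * ((W i)ᵀ * W i) = ∑ j ∈ N i, (T j)ᵀ * (E j)⁻¹ * T j := by
    intro i; rw [hP' i, hG, key, Finset.univ_inter]
    exact Finset.sum_congr rfl fun j _ => by rw [Matrix.mul_one]
  have hPG : ∀ i : ι, ((W i)ᵀ * W i) * G = ∑ j ∈ N i, (T j)ᵀ * (E j)⁻¹ * T j := by
    intro i; rw [hP' i, hG, key, Finset.inter_univ]
    exact Finset.sum_congr rfl fun j _ => by rw [Matrix.one_mul]
  have hEP : ∀ i : ι, Eglob * ((W i)ᵀ * W i) = ∑ j ∈ N i, (T j)ᵀ * E j * T j := by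
    intro i; rw [hP' i, hEglob, key, Finset.univ_inter]
    exact Finset.sum_congr rfl fun j _ => by rw [Matrix.mul_one]
  have hGglobP : ∀ i : ι, G * ((W i)ᵀ * W i) = ((W i)ᵀ * W i) * G := by
    intro i; rw [hGP i, hPG i]
  have hWP : ∀ i : ι, W i * ((W i)ᵀ * W i) = W i := by
    intro i; rw [← Matrix.mul_assoc, hWW i, Matrix.one_mul]
  have hPWt : ∀ i : ι, ((W i)ᵀ * W i) * (W i)ᵀ = (W i)ᵀ := by
    intro i; rw [Matrix.mul_assoc, hWW i, Matrix.mul_one]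
  -- key simplifications
  have hGWt : ∀ i : ι, ((W i)ᵀ * W i) * G * (W i)ᵀ = G * (W i)ᵀ := by
    intro i
    rw [hPG i, ← hGP i, Matrix.mul_assoc, hPWt i]
  have hWG : ∀ i : ι, W i * (((W i)ᵀ * W i) * G) = W i * G := by
    intro i
    rw [← Matrix.mul_assoc, hWP i]
  -- W G Wᵀ is a two-sided inverse of EN i
  have hENC : ∀ i : ι, EN i * (W i * G * (W i)ᵀ) = 1 := by
    intro i
    calc EN i * (W i * G * (W i)ᵀ)
        = W i * Eglob * (W i)ᵀ * (W i * G * (W i)ᵀ) := by rw [hEN i]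
      _ = W i * (Eglob * ((W i)ᵀ * W i) * G) * (W i)ᵀ := by
          simp only [Matrix.mul_assoc]
      _ = W i * ((∑ j ∈ N i, (T j)ᵀ * E j * T j)
            * (∑ j : ι, (T j)ᵀ * (E j)⁻¹ * T j)) * (W i)ᵀ := by rw [hEP i, hG]
      _ = W i * ((W i)ᵀ * W i) * (W i)ᵀ := by
          rw [key, Finset.inter_univ]
          have : (∑ j ∈ N i, (T j)ᵀ * (E j * (E j)⁻¹) * T j) = (W i)ᵀ * W i := by
            rw [hWTW i]
            exact Finset.sum_congr rfl fun j _ => by rw [hEinv j, Matrix.mul_one]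
          rw [this]
      _ = 1 := by rw [← Matrix.mul_assoc, hWW i, Matrix.one_mul, hWW i]
  have hCEN : ∀ i : ι, (W i * G * (W i)ᵀ) * EN i = 1 := by
    intro i
    calc (W i * G * (W i)ᵀ) * EN i
        = W i * G * (W i)ᵀ * (W i * Eglob * (W i)ᵀ) := by rw [hEN i]
      _ = W i * (G * ((W i)ᵀ * W i) * Eglob) * (W i)ᵀ := by
          simp only [Matrix.mul_assoc]
      _ = W i * ((∑ j ∈ N i, (T j)ᵀ * (E j)⁻¹ * T j)
            * (∑ j : ι, (T j)ᵀ * E j * T j)) * (W i)ᵀ := by rw [hGP i, hEglob]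
      _ = W i * ((W i)ᵀ * W i) * (W i)ᵀ := by
          rw [key, Finset.inter_univ]
          have : (∑ j ∈ N i, (T j)ᵀ * ((E j)⁻¹ * E j) * T j) = (W i)ᵀ * W i := by
            rw [hWTW i]
            exact Finset.sum_congr rfl fun j _ => by rw [hEinv' j, Matrix.mul_one]
          rw [this]
      _ = 1 := by rw [← Matrix.mul_assoc, hWW i, Matrix.one_mul, hWW i]
  have hENinv : ∀ i : ι, (EN i)⁻¹ = W i * G * (W i)ᵀ := fun i => inv_eq_right_inv (hENC i)
  constructor
  · intro i
    refine ⟨⟨⟨EN i, W i * G * (W i)ᵀ, hENC i, hCEN i⟩, rfl⟩, ?_⟩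
    rw [hENinv i, hEglobInv]
  · intro F hF
    -- each summand simplifies to G * (Wᵀ F W) * G
    have hterm : ∀ i : ι, (W i)ᵀ * ((EN i)⁻¹ * F i * (EN i)⁻¹) * W i
        = G * ((W i)ᵀ * F i * W i) * G := by
      intro i
      rw [hENinv i]
      have h1 : (W i)ᵀ * (W i * G * (W i)ᵀ) = G * (W i)ᵀ := by
        rw [← hGWt i]; simp only [Matrix.mul_assoc]
      have h2 : (W i * G * (W i)ᵀ) * W i = W i * G := by
        rw [Matrix.mul_assoc, Matrix.mul_assoc, hGglobP i, hWG i]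
      calc (W i)ᵀ * (W i * G * (W i)ᵀ * F i * (W i * G * (W i)ᵀ)) * W i
          = ((W i)ᵀ * (W i * G * (W i)ᵀ)) * F i * ((W i * G * (W i)ᵀ) * W i) := by
            simp only [Matrix.mul_assoc]
        _ = (G * (W i)ᵀ) * F i * (W i * G) := by rw [h1, h2]
        _ = G * ((W i)ᵀ * F i * W i) * G := by simp only [Matrix.mul_assoc]
    have hsum : ∑ i : ι, (W i)ᵀ * ((EN i)⁻¹ * F i * (EN i)⁻¹) * W i
        = G * (∑ i : ι, (W i)ᵀ * F i * W i) * G := by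
      simp only [hterm, ← Finset.sum_mul, ← Finset.mul_sum]
    constructor
    · rw [hsum, hEglobInv]
    · intro hpsd
      -- G is symmetric
      have hGsymm : Gᴴ = G := by
        rw [conjTranspose_eq_transpose_of_trivial, hG, transpose_sum]
        refine Finset.sum_congr rfl fun j _ => ?_
        rw [transpose_mul, transpose_mul, transpose_transpose, transpose_nonsing_inv]
        have hEj : (E j)ᵀ = E j := by
          rw [← conjTranspose_eq_transpose_of_trivial, (hE j).1.eq]
        rw [hEj, ← Matrix.mul_assoc]
      have h2 := hpsd.mul_mul_conjTranspose_same G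
      rw [hGsymm] at h2
      rw [hsum]
      have h3 : -((G * ∑ i : ι, (W i)ᵀ * F i * W i) * G)
          = G * (-∑ i : ι, (W i)ᵀ * F i * W i) * G := by
        rw [Matrix.mul_neg, Matrix.neg_mul]
      rw [h3]
      exact h2
end

section
/- Let Z ∈ ℝ^{q×N}, B_w ∈ ℝ^{r×s}, B_d ∈ ℝ^{r×ℓ}, Δ ∈ ℝ^{s×q}, D ∈ ℝ^{ℓ×N}, and set M := B_w Δ Z + B_d D ∈ ℝ^{r×N}. Let P_d ∈ ℝ^{(N+ℓ)×(N+ℓ)} be a symmetric matrix such that [D, I_ℓ] P_d [D, I_ℓ]ᵀ ⪰ 0. Define the transformation matrix T := [[−Z, 0],[M, B_d]] ∈ ℝ^{(q+r)×(N+ℓ)} (block rows (−Z, 0) and (M, B_d)) and the transformed multiplier P̃ := T P_d Tᵀ. Then the transformed uncertainty Δ̃ := B_w Δ ∈ ℝ^{r×q} satisfies [Δ̃, I_r] P̃ [Δ̃, I_r]ᵀ ⪰ 0. -/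
open Matrix

/-- Validity of the transformed data-driven multiplier class: every uncertainty
consistent with the data and the disturbance bound lies in the set certified by P̃. -/
theorem stmt9
    (q Ndat r s ℓ : ℕ)
    (Z : Matrix (Fin q) (Fin Ndat) ℝ)
    (Bw : Matrix (Fin r) (Fin s) ℝ)
    (Bd : Matrix (Fin r) (Fin ℓ) ℝ)
    (Δ : Matrix (Fin s) (Fin q) ℝ)
    (D : Matrix (Fin ℓ) (Fin Ndat) ℝ)
    (M : Matrix (Fin r) (Fin Ndat) ℝ)
    (hM : M = Bw * Δ * Z + Bd * D)
    (Pd : Matrix (Fin Ndat ⊕ Fin ℓ) (Fin Ndat ⊕ Fin ℓ) ℝ) (hPd : Pd.IsSymm)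
    (hD : ((Matrix.fromCols D (1 : Matrix (Fin ℓ) (Fin ℓ) ℝ)) * Pd * (Matrix.fromCols D (1 : Matrix (Fin ℓ) (Fin ℓ) ℝ))ᵀ).PosSemidef) :
    ((Matrix.fromCols (Bw * Δ) (1 : Matrix (Fin r) (Fin r) ℝ)) *
        ((fromBlocks (-Z) 0 M Bd) * Pd * (fromBlocks (-Z) 0 M Bd)ᵀ) *
        (Matrix.fromCols (Bw * Δ) (1 : Matrix (Fin r) (Fin r) ℝ))ᵀ).PosSemidef := by
  have key : (fromCols (Bw * Δ) 1 : Matrix (Fin r) (Fin q ⊕ Fin r) ℝ) *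
      fromBlocks (-Z) 0 M Bd = Bd * fromCols D 1 := by
    rw [fromCols_mul_fromBlocks, Matrix.mul_fromCols, Matrix.mul_one,
      Matrix.mul_zero, Matrix.one_mul, Matrix.one_mul, Matrix.mul_neg, zero_add, hM,
      neg_add_cancel_left]
  have h4 := congrArg
    (fun X : Matrix (Fin r) (Fin Ndat ⊕ Fin ℓ) ℝ => X * Pd * Xᵀ) key
  have h3 := hD.mul_mul_conjTranspose_same Bd
  rw [show Bdᴴ = Bdᵀ from rfl] at h3
  simp only [Matrix.transpose_mul, Matrix.mul_assoc] at h4 h3 ⊢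
  rw [h4]
  exact h3
end
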